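/- arXiv:quant-ph/0206093 — 6 statements merged into one kernel-verified Lean document; each statement's English description precedes it below -/
import Mathlib

section
/- For every real number c, the r×r matrix I_r − c·Σ_{i=1}^m Q_i is positive semidefinite if and only if c ≤ λ_min, where λ_min is the smallest eigenvalue of the Gram matrix ΦᴴΦ. Equivalently, the largest eigenvalue of Σ_{i=1}^m Q_i equals 1/λ_min, the reciprocal of the smallest eigenvalue of ΦᴴΦ (i.e. the reciprocal of the square of the smallest singular value of Φ). -/
/-
With `G = ΦᴴΦ` and `Ψ = ΦG⁻¹` one has `ΦᴴΨ = 1` and `∑ Qᵢ = ΨΨᴴ`. Congruence by `Φ` therefore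
turns `1 - c ΨΨᴴ` into `G - c`, and conversely
`1 - c ΨΨᴴ = (1 - ΦG⁻¹Φᴴ) + Ψ (G - c) Ψᴴ`, where `ΦG⁻¹Φᴴ` is the orthogonal projection onto the
column space of `Φ`. So `1 - c ∑ Qᵢ ⪰ 0` iff `G ⪰ c`, i.e. iff `c ≤ λ_min(G)`.
-/

open Matrix BigOperators ComplexOrder

noncomputable section

/-- The reciprocal states: columns of `Φ (ΦᴴΦ)⁻¹`. -/
def reciprocal {r m : ℕ} (Φ : Matrix (Fin r) (Fin m) ℂ) : Matrix (Fin r) (Fin m) ℂ :=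
  Φ * (Φᴴ * Φ)⁻¹

/-- The rank-one operator `Q_i = φ̃_i φ̃_iᴴ`. -/
def Qop {r m : ℕ} (Φ : Matrix (Fin r) (Fin m) ℂ) (i : Fin m) : Matrix (Fin r) (Fin r) ℂ :=
  vecMulVec (fun a => reciprocal Φ a i) (fun b => star (reciprocal Φ b i))

namespace Matrix

variable {𝕜 n m : Type*} [RCLike 𝕜] [Fintype n]

section

variable [DecidableEq n]

theorem posSemidef_sub_smul_one_iff_le {G : Matrix n n 𝕜} {lam : ℝ}
    (hev : ∃ u : n → 𝕜, u ≠ 0 ∧ G *ᵥ u = (lam : 𝕜) • u)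
    (hmin : (G - (lam : 𝕜) • 1).PosSemidef) (c : ℝ) :
    (G - (c : 𝕜) • 1).PosSemidef ↔ c ≤ lam := by
  constructor
  · intro hc
    obtain ⟨u, hu, hGu⟩ := hev
    have hquad : star u ⬝ᵥ (G - (c : 𝕜) • 1) *ᵥ u = ((lam - c : ℝ) : 𝕜) * (star u ⬝ᵥ u) := by
      rw [sub_mulVec, hGu, smul_mulVec, one_mulVec, ← sub_smul, dotProduct_smul, smul_eq_mul,
        RCLike.ofReal_sub]
    have hnonneg : 0 * (star u ⬝ᵥ u) ≤ ((lam - c : ℝ) : 𝕜) * (star u ⬝ᵥ u) := by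
      rw [zero_mul, ← hquad]
      exact hc.dotProduct_mulVec_nonneg u
    have hpos : 0 < star u ⬝ᵥ u := dotProduct_star_self_pos_iff.mpr hu
    exact sub_nonneg.mp (RCLike.ofReal_nonneg.mp (le_of_mul_le_mul_right hnonneg hpos))
  · intro hc
    have hgap : (((lam - c : ℝ) : 𝕜) • (1 : Matrix n n 𝕜)).PosSemidef :=
      PosSemidef.one.smul (RCLike.ofReal_nonneg.mpr (sub_nonneg.mpr hc))
    convert hmin.add hgap using 1
    rw [RCLike.ofReal_sub, sub_smul]
    abel

theorem IsHermitian.posSemidef_one_sub_of_isIdempotentElem {P : Matrix n n 𝕜} (hP : P.IsHermitian)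
    (hPP : IsIdempotentElem P) : (1 - P).PosSemidef := by
  have hQ : (1 - P)ᴴ = 1 - P := by rw [conjTranspose_sub, conjTranspose_one, hP.eq]
  have hQQ : (1 - P)ᴴ * (1 - P) = 1 - P := by
    rw [hQ, sub_mul, one_mul, mul_sub, mul_one, hPP.eq, sub_self, sub_zero]
  exact hQQ ▸ posSemidef_conjTranspose_mul_self (1 - P)

end

variable [Fintype m] [DecidableEq m]

theorem isHermitian_mul_inv_gram_mul_conjTranspose (Φ : Matrix n m 𝕜) :
    (Φ * (Φᴴ * Φ)⁻¹ * Φᴴ).IsHermitian := by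
  simpa only [conjTranspose_conjTranspose] using
    isHermitian_mul_mul_conjTranspose Φ (isHermitian_conjTranspose_mul_self Φ).inv

theorem isIdempotentElem_mul_inv_gram_mul_conjTranspose {Φ : Matrix n m 𝕜}
    (hG : IsUnit (Φᴴ * Φ).det) : IsIdempotentElem (Φ * (Φᴴ * Φ)⁻¹ * Φᴴ) :=
  calc Φ * (Φᴴ * Φ)⁻¹ * Φᴴ * (Φ * (Φᴴ * Φ)⁻¹ * Φᴴ)
      = Φ * ((Φᴴ * Φ)⁻¹ * (Φᴴ * Φ)) * (Φᴴ * Φ)⁻¹ * Φᴴ := by simp only [Matrix.mul_assoc]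
    _ = Φ * (Φᴴ * Φ)⁻¹ * Φᴴ := by rw [nonsing_inv_mul _ hG, Matrix.mul_one]

end Matrix

section

variable {r m : ℕ} {Φ : Matrix (Fin r) (Fin m) ℂ}

theorem sum_Qop (Φ : Matrix (Fin r) (Fin m) ℂ) :
    ∑ i, Qop Φ i = reciprocal Φ * (reciprocal Φ)ᴴ := by
  ext a b
  simp [Qop, vecMulVec_apply, mul_apply, Matrix.sum_apply]

theorem conjTranspose_mul_reciprocal (hG : IsUnit (Φᴴ * Φ).det) : Φᴴ * reciprocal Φ = 1 := by
  rw [reciprocal, ← Matrix.mul_assoc, mul_nonsing_inv _ hG]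

theorem conjTranspose_reciprocal_mul (hG : IsUnit (Φᴴ * Φ).det) : (reciprocal Φ)ᴴ * Φ = 1 := by
  rw [← conjTranspose_conjTranspose ((reciprocal Φ)ᴴ * Φ), conjTranspose_mul,
    conjTranspose_conjTranspose, conjTranspose_mul_reciprocal hG, conjTranspose_one]

theorem reciprocal_mul_gram_mul_conjTranspose_reciprocal (hG : IsUnit (Φᴴ * Φ).det) :
    reciprocal Φ * (Φᴴ * Φ) * (reciprocal Φ)ᴴ = Φ * (Φᴴ * Φ)⁻¹ * Φᴴ := by
  rw [reciprocal, Matrix.mul_assoc Φ, nonsing_inv_mul _ hG, Matrix.mul_one, conjTranspose_mul,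
    (isHermitian_conjTranspose_mul_self Φ).inv.eq, Matrix.mul_assoc]

theorem posSemidef_one_sub_smul_sum_Qop_iff (hG : IsUnit (Φᴴ * Φ).det) (c : ℝ) :
    ((1 : Matrix (Fin r) (Fin r) ℂ) - (c : ℂ) • ∑ i, Qop Φ i).PosSemidef ↔
      (Φᴴ * Φ - (c : ℂ) • 1).PosSemidef := by
  rw [sum_Qop]
  set Ψ := reciprocal Φ
  constructor
  · intro h
    convert h.conjTranspose_mul_mul_same Φ using 1
    rw [Matrix.mul_sub, Matrix.sub_mul, Matrix.mul_one, Matrix.mul_smul, Matrix.smul_mul,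
      ← Matrix.mul_assoc, conjTranspose_mul_reciprocal hG, Matrix.one_mul,
      conjTranspose_reciprocal_mul hG]
  · intro h
    have hdecomp : 1 - (c : ℂ) • (Ψ * Ψᴴ) =
        (1 - Ψ * (Φᴴ * Φ) * Ψᴴ) + Ψ * (Φᴴ * Φ - (c : ℂ) • 1) * Ψᴴ := by
      rw [Matrix.mul_sub, Matrix.sub_mul, Matrix.mul_smul, Matrix.smul_mul, Matrix.mul_one]
      abel
    rw [hdecomp, reciprocal_mul_gram_mul_conjTranspose_reciprocal hG]
    exact ((isHermitian_mul_inv_gram_mul_conjTranspose Φ).posSemidef_one_sub_of_isIdempotentElem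
      (isIdempotentElem_mul_inv_gram_mul_conjTranspose hG)).add (h.mul_mul_conjTranspose_same Ψ)

end

theorem stmt_1_general (m r : ℕ)
    (Φ : Matrix (Fin r) (Fin m) ℂ)
    (hind : LinearIndependent ℂ (fun i : Fin m => fun j : Fin r => Φ j i))
    (lam : ℝ)
    -- `lam` is an eigenvalue of the Gram matrix `ΦᴴΦ` ...
    (hev : ∃ u : Fin m → ℂ, u ≠ 0 ∧ (Φᴴ * Φ).mulVec u = (lam : ℂ) • u)
    -- ... and it is the smallest one:
    (hmin : ((Φᴴ * Φ) - (lam : ℂ) • 1).PosSemidef) :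
    ∀ c : ℝ,
      ((1 : Matrix (Fin r) (Fin r) ℂ) - (c : ℂ) • ∑ i : Fin m, Qop Φ i).PosSemidef ↔
        c ≤ lam := by
  have hG : IsUnit (Φᴴ * Φ).det :=
    (PosDef.conjTranspose_mul_self Φ (mulVec_injective_iff.mpr hind)).det_pos.ne'.isUnit
  intro c
  exact (posSemidef_one_sub_smul_sum_Qop_iff hG c).trans (posSemidef_sub_smul_one_iff_le hev hmin c)

theorem stmt_1 (m r : ℕ) (hm : 0 < m) (hmr : m ≤ r)
    (Φ : Matrix (Fin r) (Fin m) ℂ)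
    (hind : LinearIndependent ℂ (fun i : Fin m => fun j : Fin r => Φ j i))
    (lam : ℝ)
    -- `lam` is an eigenvalue of the Gram matrix `ΦᴴΦ` ...
    (hev : ∃ u : Fin m → ℂ, u ≠ 0 ∧ (Φᴴ * Φ).mulVec u = (lam : ℂ) • u)
    -- ... and it is the smallest one:
    (hmin : ((Φᴴ * Φ) - (lam : ℂ) • 1).PosSemidef) :
    ∀ c : ℝ,
      ((1 : Matrix (Fin r) (Fin r) ℂ) - (c : ℂ) • ∑ i : Fin m, Qop Φ i).PosSemidef ↔
        c ≤ lam :=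
  stmt_1_general m r Φ hind lam hev hmin
end
end

section
/- (Strong duality.) The supremum of Σ_{i=1}^m η_i p_i over all primal feasible p equals the infimum of Re Tr(X) over all r×r Hermitian positive semidefinite matrices X satisfying Re Tr(Q_i X) ≥ η_i for every i. -/
open Matrix BigOperators ComplexOrder

noncomputable section

/-- `p` is primal feasible: `p_i ≥ 0` and `I - Σ p_i Q_i ⪰ 0`. -/
def PrimalFeasible {r m : ℕ} (Φ : Matrix (Fin r) (Fin m) ℂ) (p : Fin m → ℝ) : Prop :=
  (∀ i, 0 ≤ p i) ∧
    ((1 : Matrix (Fin r) (Fin r) ℂ) - ∑ i : Fin m, (p i : ℂ) • Qop Φ i).PosSemidef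

/-- `(X, z)` is dual feasible: `X ⪰ 0`, `z_i ≥ 0` and `Re Tr(Q_i X) = η_i + z_i`. -/
def DualFeasible {r m : ℕ} (Φ : Matrix (Fin r) (Fin m) ℂ) (η : Fin m → ℝ)
    (X : Matrix (Fin r) (Fin r) ℂ) (z : Fin m → ℝ) : Prop :=
  X.PosSemidef ∧ (∀ i, 0 ≤ z i) ∧ ∀ i, (Matrix.trace (Qop Φ i * X)).re = η i + z i

open Filter Topology

set_option linter.unusedSectionVars false
set_option maxHeartbeats 1000000

namespace SDAux

attribute [local instance] Matrix.normedAddCommGroup Matrix.normedSpace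

variable {n : Type*} [Fintype n] [DecidableEq n]

lemma complex_nonneg_iff {z : ℂ} : 0 ≤ z ↔ 0 ≤ z.re ∧ z.im = 0 := by
  rw [Complex.le_def]; simp [eq_comm]

lemma rsmul_eq {α β : Type*} (c : ℝ) (M : Matrix α β ℂ) : c • M = (c : ℂ) • M := by
  ext a b; simp [Complex.real_smul]

lemma psd_smul {M : Matrix n n ℂ} (hM : M.PosSemidef) {c : ℝ} (hc : 0 ≤ c) :
    ((c : ℂ) • M).PosSemidef := by
  refine PosSemidef.of_dotProduct_mulVec_nonneg ?_ ?_
  · show _ = _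
    rw [conjTranspose_smul, hM.1]
    congr 1
    simp
  · intro x
    rw [Matrix.smul_mulVec, dotProduct_smul, smul_eq_mul]
    exact mul_nonneg (by exact_mod_cast hc) (hM.dotProduct_mulVec_nonneg x)

lemma psd_diag_nonneg {M : Matrix n n ℂ} (hM : M.PosSemidef) (a : n) : 0 ≤ M a a := by
  have h := hM.dotProduct_mulVec_nonneg (Pi.single a 1)
  have he : star (Pi.single a 1 : n → ℂ) ⬝ᵥ (M *ᵥ Pi.single a 1) = M a a := by
    simp [dotProduct, Matrix.mulVec, Pi.single_apply, apply_ite, Finset.sum_ite_eq',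
      Finset.mul_sum, mul_ite]
  rwa [he] at h

lemma psd_trace_re_nonneg {M : Matrix n n ℂ} (hM : M.PosSemidef) : 0 ≤ (M.trace).re := by
  have h : (0 : ℂ) ≤ M.trace := Finset.sum_nonneg fun a _ => psd_diag_nonneg hM a
  exact (complex_nonneg_iff.mp h).1

lemma psd_trace_mul_re_nonneg {A B : Matrix n n ℂ} (hA : A.PosSemidef) (hB : B.PosSemidef) :
    0 ≤ (Matrix.trace (A * B)).re := by
  obtain ⟨C, rfl⟩ : ∃ C : Matrix n n ℂ, A = Cᴴ * C := by
    open scoped MatrixOrder in exact CStarAlgebra.nonneg_iff_eq_star_mul_self.mp hA.nonneg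
  have h2 : Matrix.trace (Cᴴ * C * B) = Matrix.trace (C * B * Cᴴ) := by
    rw [Matrix.mul_assoc, trace_mul_comm, Matrix.mul_assoc]
  rw [h2]
  exact psd_trace_re_nonneg (hB.mul_mul_conjTranspose_same C)

lemma trace_vecMulVec_mul (v : n → ℂ) (X : Matrix n n ℂ) :
    Matrix.trace (vecMulVec v (star v) * X) = star v ⬝ᵥ (X *ᵥ v) := by
  simp only [Matrix.trace, Matrix.diag, Matrix.mul_apply, vecMulVec_apply, dotProduct,
    Matrix.mulVec, Pi.star_apply]
  rw [Finset.sum_comm]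
  refine Finset.sum_congr rfl fun b _ => ?_
  rw [Finset.mul_sum]
  exact Finset.sum_congr rfl fun a _ => by ring

lemma psd_vecMulVec (v : n → ℂ) : (vecMulVec v (star v)).PosSemidef := by
  refine PosSemidef.of_dotProduct_mulVec_nonneg ?_ ?_
  · show _ = _
    ext a b
    simp [conjTranspose_apply, vecMulVec_apply, mul_comm]
  · intro x
    have h : star x ⬝ᵥ (vecMulVec v (star v) *ᵥ x) = star (star v ⬝ᵥ x) * (star v ⬝ᵥ x) := by
      simp only [dotProduct, Matrix.mulVec, vecMulVec_apply, Pi.star_apply, Finset.sum_mul,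
        Finset.mul_sum, star_sum, star_mul', star_star]
      rw [Finset.sum_comm]
      refine Finset.sum_congr rfl fun a _ => Finset.sum_congr rfl fun b _ => by ring
    rw [h]
    exact star_mul_self_nonneg _

lemma psd_of_tendsto {A : ℕ → Matrix n n ℂ} {L : Matrix n n ℂ}
    (hA : ∀ k, (A k).PosSemidef)
    (h : ∀ a b, Tendsto (fun k => A k a b) atTop (nhds (L a b))) : L.PosSemidef := by
  refine PosSemidef.of_dotProduct_mulVec_nonneg ?_ ?_
  · show _ = _
    ext a b
    have h1 : Tendsto (fun k => star (A k b a)) atTop (nhds (star (L b a))) :=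
      (continuous_star.tendsto _).comp (h b a)
    have h2 : (fun k => star (A k b a)) = fun k => A k a b := by
      funext k
      exact congrFun (congrFun ((hA k).1) a) b
    rw [h2] at h1
    have := tendsto_nhds_unique h1 (h a b)
    simpa [conjTranspose_apply] using this
  · intro x
    have hq : Tendsto (fun k => star x ⬝ᵥ (A k *ᵥ x)) atTop (nhds (star x ⬝ᵥ (L *ᵥ x))) := by
      have hform : ∀ M : Matrix n n ℂ, star x ⬝ᵥ (M *ᵥ x)
          = ∑ a, ∑ b, star (x a) * (M a b * x b) := by
        intro M
        simp [dotProduct, Matrix.mulVec, Finset.mul_sum]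
      simp only [hform]
      exact tendsto_finset_sum _ fun a _ => tendsto_finset_sum _ fun b _ =>
        (((h a b).mul_const (x b)).const_mul _)
    rw [complex_nonneg_iff]
    constructor
    · refine ge_of_tendsto ((Complex.continuous_re.tendsto _).comp hq) ?_
      exact Eventually.of_forall fun k => (complex_nonneg_iff.mp ((hA k).dotProduct_mulVec_nonneg x)).1
    · have him : Tendsto (fun k => (star x ⬝ᵥ (A k *ᵥ x)).im) atTop
          (nhds ((star x ⬝ᵥ (L *ᵥ x)).im)) := (Complex.continuous_im.tendsto _).comp hq
      have hz : (fun k => (star x ⬝ᵥ (A k *ᵥ x)).im) = fun _ => (0:ℝ) := by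
        funext k
        exact (complex_nonneg_iff.mp ((hA k).dotProduct_mulVec_nonneg x)).2
      rw [hz] at him
      exact tendsto_nhds_unique him tendsto_const_nhds

lemma le_zero_of_forall_lin {a b u : ℝ} (h : ∀ c : ℝ, 0 ≤ c → c * a + b < u) : a ≤ 0 := by
  by_contra hlt
  push_neg at hlt
  have h0 := h 0 le_rfl
  have h1 := h ((u - b) / a) (div_nonneg (by linarith) hlt.le)
  rw [div_mul_cancel₀ _ (ne_of_gt hlt)] at h1
  linarith

lemma re_aux (h₁ h₂ : ℝ) (z : ℂ) :
    (((h₁ : ℂ) - Complex.I * (h₂ : ℂ)) * z).re = h₁ * z.re + h₂ * z.im := by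
  simp [Complex.mul_re, Complex.sub_re, Complex.sub_im, Complex.mul_im]

variable {m r : ℕ} (Φ : Matrix (Fin r) (Fin m) ℂ)

/-- column `i` of `Φ`. -/
def ψ (i : Fin m) : Fin r → ℂ := fun a => Φ a i

/-- column `i` of the reciprocal. -/
def φt (i : Fin m) : Fin r → ℂ := fun a => reciprocal Φ a i

lemma sum_mulVec {ι : Type*} (s : Finset ι) (A : ι → Matrix (Fin r) (Fin r) ℂ) (x : Fin r → ℂ) :
    (∑ j ∈ s, A j) *ᵥ x = ∑ j ∈ s, A j *ᵥ x := by
  funext a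
  simp only [Matrix.mulVec, dotProduct, Finset.sum_apply, Matrix.sum_apply, Finset.sum_mul]
  exact Finset.sum_comm

lemma dot_sum {ι : Type*} (s : Finset ι) (v : Fin r → ℂ) (f : ι → Fin r → ℂ) :
    v ⬝ᵥ (∑ j ∈ s, f j) = ∑ j ∈ s, v ⬝ᵥ f j := by
  simp only [dotProduct, Finset.sum_apply, Finset.mul_sum]
  exact Finset.sum_comm

lemma Qop_eq (i : Fin m) : Qop Φ i = vecMulVec (φt Φ i) (star (φt Φ i)) := rfl

lemma gram_isUnit (hind : LinearIndependent ℂ (fun i : Fin m => fun j : Fin r => Φ j i)) :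
    IsUnit (Φᴴ * Φ).det := by
  rw [← Matrix.isUnit_iff_isUnit_det, ← Matrix.mulVec_injective_iff_isUnit]
  have h0 : ∀ z : Fin m → ℂ, (Φᴴ * Φ) *ᵥ z = 0 → z = 0 := by
    intro z hz
    have h1 : star z ⬝ᵥ ((Φᴴ * Φ) *ᵥ z) = star (Φ *ᵥ z) ⬝ᵥ (Φ *ᵥ z) := by
      rw [← Matrix.mulVec_mulVec, Matrix.dotProduct_mulVec, Matrix.star_mulVec]
    have h2 : star (Φ *ᵥ z) ⬝ᵥ (Φ *ᵥ z) = 0 := by rw [← h1, hz, dotProduct_zero]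
    have h3 : Φ *ᵥ z = 0 := dotProduct_star_self_eq_zero.mp h2
    have h4 : ∑ i : Fin m, z i • (fun j : Fin r => Φ j i) = 0 := by
      funext j
      have := congrFun h3 j
      simpa [Matrix.mulVec, dotProduct, Finset.sum_apply, mul_comm] using this
    funext i
    exact Fintype.linearIndependent_iff.mp hind z h4 i
  intro x y hxy
  have h5 : (Φᴴ * Φ) *ᵥ (x - y) = 0 := by
    rw [Matrix.mulVec_sub, hxy, sub_self]
  exact sub_eq_zero.mp (h0 _ h5)

lemma recip_mul (hind : LinearIndependent ℂ (fun i : Fin m => fun j : Fin r => Φ j i)) :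
    (reciprocal Φ)ᴴ * Φ = 1 := by
  have hdet := gram_isUnit Φ hind
  have hherm : (Φᴴ * Φ)ᴴ = Φᴴ * Φ := by
    rw [conjTranspose_mul, conjTranspose_conjTranspose]
  rw [reciprocal, conjTranspose_mul, conjTranspose_nonsing_inv, hherm, Matrix.mul_assoc]
  exact Matrix.nonsing_inv_mul _ hdet

lemma dot_recip_col (hind : LinearIndependent ℂ (fun i : Fin m => fun j : Fin r => Φ j i))
    (i j : Fin m) :
    star (φt Φ i) ⬝ᵥ ψ Φ j = if i = j then 1 else 0 := by
  have h := congrFun (congrFun (recip_mul Φ hind) i) j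
  simpa [Matrix.mul_apply, conjTranspose_apply, dotProduct, φt, ψ, Matrix.one_apply] using h

lemma Q_mulVec (i : Fin m) (x : Fin r → ℂ) :
    Qop Φ i *ᵥ x = (star (φt Φ i) ⬝ᵥ x) • φt Φ i := by
  funext a
  simp only [Qop_eq, Matrix.mulVec, dotProduct, vecMulVec_apply, Pi.smul_apply, smul_eq_mul,
    Pi.star_apply, Finset.sum_mul]
  exact Finset.sum_congr rfl fun b _ => by ring

lemma star_dot_swap (v w : Fin r → ℂ) : star (star v ⬝ᵥ w) = star w ⬝ᵥ v := by
  simp only [dotProduct, star_sum, star_mul', star_star, Pi.star_apply]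
  exact Finset.sum_congr rfl fun a _ => by ring

lemma quad_sum_Q (hind : LinearIndependent ℂ (fun i : Fin m => fun j : Fin r => Φ j i))
    (c : Fin m → ℂ) (i : Fin m) :
    star (ψ Φ i) ⬝ᵥ ((∑ j : Fin m, c j • Qop Φ j) *ᵥ ψ Φ i) = c i := by
  have hQ : ∀ j, star (ψ Φ i) ⬝ᵥ (Qop Φ j *ᵥ ψ Φ i) = if j = i then 1 else 0 := by
    intro j
    rw [Q_mulVec, dot_recip_col Φ hind j i, dotProduct_smul]
    by_cases h : j = i
    · subst h
      have h1 : star (ψ Φ j) ⬝ᵥ φt Φ j = 1 := by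
        have h2 := star_dot_swap (φt Φ j) (ψ Φ j)
        rw [dot_recip_col Φ hind j j] at h2
        simpa using h2.symm
      simp [h1]
    · simp [h]
  have hsum : (∑ j : Fin m, c j • Qop Φ j) *ᵥ ψ Φ i = ∑ j : Fin m, c j • (Qop Φ j *ᵥ ψ Φ i) := by
    rw [sum_mulVec]
    exact Finset.sum_congr rfl fun j _ => by rw [Matrix.smul_mulVec]
  rw [hsum, dot_sum]
  simp only [dotProduct_smul, smul_eq_mul, hQ, mul_ite, mul_one, mul_zero]
  simp [Finset.sum_ite_eq']

lemma p_le_of_psd (hind : LinearIndependent ℂ (fun i : Fin m => fun j : Fin r => Φ j i))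
    {p : Fin m → ℝ} {M : Matrix (Fin r) (Fin r) ℂ}
    (h : (M + 1 - ∑ j : Fin m, (p j : ℂ) • Qop Φ j).PosSemidef) (i : Fin m) :
    p i ≤ (star (ψ Φ i) ⬝ᵥ (M *ᵥ ψ Φ i)).re + (star (ψ Φ i) ⬝ᵥ ψ Φ i).re := by
  have h2 := (complex_nonneg_iff.mp (h.dotProduct_mulVec_nonneg (ψ Φ i))).1
  rw [Matrix.sub_mulVec, Matrix.add_mulVec, Matrix.one_mulVec, dotProduct_sub, dotProduct_add,
    quad_sum_Q Φ hind] at h2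
  simp only [Complex.sub_re, Complex.add_re, Complex.ofReal_re] at h2
  linarith

end SDAux

open SDAux

attribute [local instance] Matrix.normedAddCommGroup Matrix.normedSpace

theorem stmt_4 (m r : ℕ) (hm : 0 < m) (hmr : m ≤ r)
    (Φ : Matrix (Fin r) (Fin m) ℂ)
    (hind : LinearIndependent ℂ (fun i : Fin m => fun j : Fin r => Φ j i))
    (η : Fin m → ℝ) (hη : ∀ i, 0 ≤ η i) (hη1 : ∑ i : Fin m, η i = 1) :
    sSup {x : ℝ | ∃ p : Fin m → ℝ, PrimalFeasible Φ p ∧ x = ∑ i : Fin m, η i * p i} =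
      sInf {x : ℝ | ∃ X : Matrix (Fin r) (Fin r) ℂ, X.PosSemidef ∧
        (∀ i : Fin m, η i ≤ (Matrix.trace (Qop Φ i * X)).re) ∧ x = (Matrix.trace X).re} := by
  classical
  set S : Set ℝ := {x : ℝ | ∃ p : Fin m → ℝ, PrimalFeasible Φ p ∧ x = ∑ i : Fin m, η i * p i}
    with hSdef
  set T : Set ℝ := {x : ℝ | ∃ X : Matrix (Fin r) (Fin r) ℂ, X.PosSemidef ∧
      (∀ i : Fin m, η i ≤ (Matrix.trace (Qop Φ i * X)).re) ∧ x = (Matrix.trace X).re} with hTdef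
  set B : Fin m → ℝ := fun i => (star (ψ Φ i) ⬝ᵥ ψ Φ i).re with hBdef
  have hQpsd : ∀ i, (Qop Φ i).PosSemidef := fun i => Qop_eq Φ i ▸ psd_vecMulVec (φt Φ i)
  have hQherm : ∀ i, (Qop Φ i)ᴴ = Qop Φ i := fun i => (hQpsd i).1
  have hS0 : (0:ℝ) ∈ S := by
    refine ⟨0, ⟨fun i => le_rfl, ?_⟩, by simp⟩
    simpa using (Matrix.PosSemidef.one (n := Fin r) (R := ℂ))
  have hfeas_le : ∀ p : Fin m → ℝ, PrimalFeasible Φ p → ∀ i, p i ≤ B i := by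
    intro p hp i
    have h : ((0 : Matrix (Fin r) (Fin r) ℂ) + 1 - ∑ j : Fin m, (p j : ℂ) • Qop Φ j).PosSemidef := by
      simpa using hp.2
    have h1 := p_le_of_psd Φ hind h i
    simpa using h1
  have hSbdd : BddAbove S := by
    refine ⟨∑ i : Fin m, η i * B i, ?_⟩
    rintro x ⟨p, hp, rfl⟩
    exact Finset.sum_le_sum fun i _ => mul_le_mul_of_nonneg_left (hfeas_le p hp i) (hη i)
  set v : ℝ := sSup S with hvdef
  have weak : ∀ xT ∈ T, ∀ xS ∈ S, xS ≤ xT := by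
    rintro xT ⟨X, hX, hXc, rfl⟩ xS ⟨p, ⟨hp0, hpM⟩, rfl⟩
    have step1 : ∑ i : Fin m, η i * p i ≤ ∑ i : Fin m, p i * (Matrix.trace (Qop Φ i * X)).re :=
      Finset.sum_le_sum fun i _ => by
        rw [mul_comm]
        exact mul_le_mul_of_nonneg_left (hXc i) (hp0 i)
    have step2 : ∑ i : Fin m, p i * (Matrix.trace (Qop Φ i * X)).re
        = (Matrix.trace ((∑ i : Fin m, (p i : ℂ) • Qop Φ i) * X)).re := by
      rw [Matrix.sum_mul, Matrix.trace_sum, Complex.re_sum]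
      refine Finset.sum_congr rfl fun i _ => ?_
      rw [Matrix.smul_mul, Matrix.trace_smul, smul_eq_mul, Complex.re_ofReal_mul]
    have step3 : (Matrix.trace ((∑ i : Fin m, (p i : ℂ) • Qop Φ i) * X)).re
        ≤ (Matrix.trace X).re := by
      have h4 := psd_trace_mul_re_nonneg hpM hX
      have h5 : Matrix.trace (((1 : Matrix (Fin r) (Fin r) ℂ)
            - ∑ i : Fin m, (p i : ℂ) • Qop Φ i) * X)
          = Matrix.trace X - Matrix.trace ((∑ i : Fin m, (p i : ℂ) • Qop Φ i) * X) := by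
        rw [Matrix.sub_mul, Matrix.one_mul, Matrix.trace_sub]
      rw [h5] at h4
      simp only [Complex.sub_re] at h4
      linarith
    linarith
  have hTlb : ∀ x ∈ T, (0:ℝ) ≤ x := by
    rintro x ⟨X, hX, _, rfl⟩
    exact psd_trace_re_nonneg hX
  have strong : ∀ ε : ℝ, 0 < ε → ∃ x ∈ T, x < v + ε := by
    intro ε hε
    set C : Set (ℝ × Matrix (Fin r) (Fin r) ℂ) :=
      {q | ∃ p : Fin m → ℝ, (∀ i, 0 ≤ p i) ∧ q.1 ≤ ∑ i : Fin m, η i * p i ∧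
        (q.2 + 1 - ∑ i : Fin m, (p i : ℂ) • Qop Φ i).PosSemidef} with hCdef
    have hCconv : Convex ℝ C := by
      rintro ⟨t1, M1⟩ ⟨p1, hp10, hp1t, hp1M⟩ ⟨t2, M2⟩ ⟨p2, hp20, hp2t, hp2M⟩ a b ha hb hab
      refine ⟨fun i => a * p1 i + b * p2 i,
        fun i => add_nonneg (mul_nonneg ha (hp10 i)) (mul_nonneg hb (hp20 i)), ?_, ?_⟩
      · show a * t1 + b * t2 ≤ _
        have hs : ∑ i : Fin m, η i * (a * p1 i + b * p2 i)
            = a * ∑ i : Fin m, η i * p1 i + b * ∑ i : Fin m, η i * p2 i := by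
          rw [Finset.mul_sum, Finset.mul_sum, ← Finset.sum_add_distrib]
          exact Finset.sum_congr rfl fun i _ => by ring
        rw [hs]
        exact add_le_add (mul_le_mul_of_nonneg_left hp1t ha) (mul_le_mul_of_nonneg_left hp2t hb)
      · show ((a • M1 + b • M2 : Matrix (Fin r) (Fin r) ℂ) + 1
            - ∑ i : Fin m, ((a * p1 i + b * p2 i : ℝ) : ℂ) • Qop Φ i).PosSemidef
        have hab' : (a:ℂ) + (b:ℂ) = 1 := by exact_mod_cast hab
        have hsum : ∑ i : Fin m, ((a * p1 i + b * p2 i : ℝ) : ℂ) • Qop Φ i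
            = (a:ℂ) • (∑ i : Fin m, (p1 i : ℂ) • Qop Φ i)
              + (b:ℂ) • (∑ i : Fin m, (p2 i : ℂ) • Qop Φ i) := by
          rw [Finset.smul_sum, Finset.smul_sum, ← Finset.sum_add_distrib]
          refine Finset.sum_congr rfl fun i _ => ?_
          rw [smul_smul, smul_smul, ← add_smul]
          push_cast
          ring_nf
        have expand : (a:ℂ) • (M1 + 1 - ∑ i : Fin m, (p1 i : ℂ) • Qop Φ i)
              + (b:ℂ) • (M2 + 1 - ∑ i : Fin m, (p2 i : ℂ) • Qop Φ i)
            = (a:ℂ) • M1 + (b:ℂ) • M2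
              + ((a:ℂ)+(b:ℂ)) • (1 : Matrix (Fin r) (Fin r) ℂ)
              - ((a:ℂ) • (∑ i : Fin m, (p1 i : ℂ) • Qop Φ i)
                + (b:ℂ) • (∑ i : Fin m, (p2 i : ℂ) • Qop Φ i)) := by
          simp only [smul_add, smul_sub, add_smul]
          abel
        have key : (a • M1 + b • M2 : Matrix (Fin r) (Fin r) ℂ) + 1
              - ∑ i : Fin m, ((a * p1 i + b * p2 i : ℝ) : ℂ) • Qop Φ i
            = (a:ℂ) • (M1 + 1 - ∑ i : Fin m, (p1 i : ℂ) • Qop Φ i)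
              + (b:ℂ) • (M2 + 1 - ∑ i : Fin m, (p2 i : ℂ) • Qop Φ i) := by
          rw [hsum, rsmul_eq a M1, rsmul_eq b M2, expand, hab', one_smul]
        rw [key]
        exact Matrix.PosSemidef.add (psd_smul hp1M ha) (psd_smul hp2M hb)
    have hCclosed : IsClosed C := by
      haveI : SequentialSpace (ℝ × Matrix (Fin r) (Fin r) ℂ) :=
        (inferInstance : SequentialSpace (ℝ × (Fin r → Fin r → ℂ)))
      refine IsSeqClosed.isClosed ?_
      intro g q hg hgq
      choose p hp0 hpt hpM using hg
      have hgt : Tendsto (fun k => (g k).1) atTop (nhds q.1) := (continuous_fst.tendsto q).comp hgq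
      have hgM : Tendsto (fun k => (g k).2) atTop (nhds q.2) := (continuous_snd.tendsto q).comp hgq
      have hMe : ∀ a b, Tendsto (fun k => (g k).2 a b) atTop (nhds (q.2 a b)) := by
        intro a b
        exact ((continuous_id.matrix_elem a b).tendsto q.2).comp hgM
      have hquad : ∀ i : Fin m, Tendsto (fun k => (star (ψ Φ i) ⬝ᵥ ((g k).2 *ᵥ ψ Φ i)).re) atTop
          (nhds ((star (ψ Φ i) ⬝ᵥ (q.2 *ᵥ ψ Φ i)).re)) := by
        intro i
        have hform : ∀ M : Matrix (Fin r) (Fin r) ℂ, star (ψ Φ i) ⬝ᵥ (M *ᵥ ψ Φ i)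
            = ∑ a, ∑ b, star (ψ Φ i a) * (M a b * ψ Φ i b) := by
          intro M
          simp [dotProduct, Matrix.mulVec, Finset.mul_sum]
        have h1 : Tendsto (fun k => star (ψ Φ i) ⬝ᵥ ((g k).2 *ᵥ ψ Φ i)) atTop
            (nhds (star (ψ Φ i) ⬝ᵥ (q.2 *ᵥ ψ Φ i))) := by
          simp only [hform]
          exact tendsto_finset_sum _ fun a _ => tendsto_finset_sum _ fun b _ =>
            (((hMe a b).mul_const _).const_mul _)
        exact (Complex.continuous_re.tendsto _).comp h1
      have hbound : ∀ i : Fin m, ∃ K : ℝ, ∀ k, p k i ≤ K := by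
        intro i
        obtain ⟨K, hK⟩ := (hquad i).isBoundedUnder_le.bddAbove_range
        refine ⟨K + B i, fun k => ?_⟩
        have h2 := p_le_of_psd Φ hind (hpM k) i
        have h3 : (star (ψ Φ i) ⬝ᵥ ((g k).2 *ᵥ ψ Φ i)).re ≤ K := hK (Set.mem_range_self k)
        have h4 : B i = (star (ψ Φ i) ⬝ᵥ ψ Φ i).re := rfl
        linarith
      choose K hK using hbound
      have hmem : ∀ k, p k ∈ Set.Icc (0 : Fin m → ℝ) K :=
        fun k => ⟨fun i => hp0 k i, fun i => hK i k⟩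
      obtain ⟨pl, hplmem, φn, hφmono, hφtend⟩ :=
        (isCompact_Icc (a := (0 : Fin m → ℝ)) (b := K)).tendsto_subseq hmem
      have hplt : ∀ i, Tendsto (fun k => p (φn k) i) atTop (nhds (pl i)) :=
        fun i => (tendsto_pi_nhds.mp hφtend) i
      refine ⟨pl, fun i => hplmem.1 i, ?_, ?_⟩
      · have h1 : Tendsto (fun k => (g (φn k)).1) atTop (nhds q.1) :=
          hgt.comp hφmono.tendsto_atTop
        have h2 : Tendsto (fun k => ∑ i : Fin m, η i * p (φn k) i) atTop
            (nhds (∑ i : Fin m, η i * pl i)) :=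
          tendsto_finset_sum _ fun i _ => (hplt i).const_mul _
        exact le_of_tendsto_of_tendsto' h1 h2 fun k => hpt (φn k)
      · refine psd_of_tendsto
          (A := fun k => (g (φn k)).2 + 1 - ∑ i : Fin m, (p (φn k) i : ℂ) • Qop Φ i)
          (fun k => hpM (φn k)) ?_
        intro a b
        have hMab : Tendsto (fun k => (g (φn k)).2 a b) atTop (nhds (q.2 a b)) :=
          (hMe a b).comp hφmono.tendsto_atTop
        have hsumab : Tendsto (fun k => ∑ i : Fin m, (p (φn k) i : ℂ) * Qop Φ i a b) atTop
            (nhds (∑ i : Fin m, (pl i : ℂ) * Qop Φ i a b)) :=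
          tendsto_finset_sum _ fun i _ =>
            ((Complex.continuous_ofReal.tendsto _).comp (hplt i)).mul_const _
        have hcomb : Tendsto (fun k => (g (φn k)).2 a b + (1 : Matrix (Fin r) (Fin r) ℂ) a b
            - ∑ i : Fin m, (p (φn k) i : ℂ) * Qop Φ i a b) atTop
            (nhds (q.2 a b + (1 : Matrix (Fin r) (Fin r) ℂ) a b
              - ∑ i : Fin m, (pl i : ℂ) * Qop Φ i a b)) :=
          (hMab.add tendsto_const_nhds).sub hsumab
        simpa [Matrix.add_apply, Matrix.sub_apply, Matrix.sum_apply, Matrix.smul_apply,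
          smul_eq_mul] using hcomb
    have hptnot : ((v + ε, (0 : Matrix (Fin r) (Fin r) ℂ)) : ℝ × Matrix (Fin r) (Fin r) ℂ) ∉ C := by
      rintro ⟨p, hp0, hpt', hpM⟩
      have hfeas : PrimalFeasible Φ p := ⟨hp0, by simpa using hpM⟩
      have hmem : (∑ i : Fin m, η i * p i) ∈ S := ⟨p, hfeas, rfl⟩
      have h1 : (∑ i : Fin m, η i * p i) ≤ v := le_csSup hSbdd hmem
      have h2 : v + ε ≤ ∑ i : Fin m, η i * p i := hpt'
      linarith
    haveI : LocallyConvexSpace ℝ (ℝ × Matrix (Fin r) (Fin r) ℂ) :=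
      (inferInstance : LocallyConvexSpace ℝ (ℝ × (Fin r → Fin r → ℂ)))
    obtain ⟨f, u, hfC, hfpt⟩ := geometric_hahn_banach_closed_point hCconv hCclosed hptnot
    set α : ℝ := f (1, 0) with hαdef
    set g' : Matrix (Fin r) (Fin r) ℂ →ₗ[ℝ] ℝ :=
      (f.toLinearMap).comp (LinearMap.inr ℝ ℝ (Matrix (Fin r) (Fin r) ℂ)) with hg'def
    have hg'app : ∀ M : Matrix (Fin r) (Fin r) ℂ, g' M = f (0, M) := fun M => rfl
    have hfsplit : ∀ (t : ℝ) (M : Matrix (Fin r) (Fin r) ℂ), f (t, M) = t * α + g' M := by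
      intro t M
      have h1 : ((t, M) : ℝ × Matrix (Fin r) (Fin r) ℂ)
          = t • ((1:ℝ), (0 : Matrix (Fin r) (Fin r) ℂ)) + ((0:ℝ), M) := by
        simp [Prod.ext_iff]
      rw [h1, _root_.map_add, _root_.map_smul, hg'app]
      simp [hαdef, smul_eq_mul]
    have hmem0 : ∀ (t : ℝ), t ≤ 0 → ∀ M : Matrix (Fin r) (Fin r) ℂ, (M + 1).PosSemidef →
        ((t, M) : ℝ × Matrix (Fin r) (Fin r) ℂ) ∈ C := by
      intro t ht M hM
      exact ⟨0, fun i => le_rfl, by simpa using ht, by simpa using hM⟩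
    have hα0 : 0 ≤ α := by
      have h : -α ≤ 0 := by
        refine le_zero_of_forall_lin (b := (0:ℝ)) (u := u) ?_
        intro c hc
        have hmem := hmem0 (-c) (by linarith) (0 : Matrix (Fin r) (Fin r) ℂ)
          (by simpa using (Matrix.PosSemidef.one (n := Fin r) (R := ℂ)))
        have h1 := hfC _ hmem
        rw [hfsplit, _root_.map_zero] at h1
        have h2 : c * -α + 0 = -c * α + 0 := by ring
        rw [h2]
        exact h1
      linarith
    have hg'V : ∀ x : Fin r → ℂ, g' (vecMulVec x (star x)) ≤ 0 := by
      intro x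
      refine le_zero_of_forall_lin (b := g' (-1)) (u := u) ?_
      intro c hc
      have hmemc : (((0:ℝ), c • vecMulVec x (star x) - 1) : ℝ × Matrix (Fin r) (Fin r) ℂ) ∈ C := by
        apply hmem0 0 le_rfl
        have h1 : (c • vecMulVec x (star x) - 1 : Matrix (Fin r) (Fin r) ℂ) + 1
            = c • vecMulVec x (star x) := by
          rw [sub_add_cancel]
        rw [h1, rsmul_eq]
        exact psd_smul (psd_vecMulVec x) hc
      have h1 := hfC _ hmemc
      have h2 : f ((0:ℝ), c • vecMulVec x (star x) - 1)
          = c * g' (vecMulVec x (star x)) + g' (-1) := by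
        rw [hfsplit]
        have h3 : (c • vecMulVec x (star x) - 1 : Matrix (Fin r) (Fin r) ℂ)
            = c • vecMulVec x (star x) + (-1) := by rw [sub_eq_add_neg]
        rw [h3, _root_.map_add, _root_.map_smul, smul_eq_mul]
        ring
      rw [h2] at h1
      exact h1
    have hg'Q : ∀ i : Fin m, η i * α + g' (Qop Φ i) ≤ 0 := by
      intro i
      have key : ∀ c : ℝ, 0 ≤ c → c * (η i * α + g' (Qop Φ i)) + g' (-1) < u := by
        intro c hc
        have hmemc : (((c * η i : ℝ), c • Qop Φ i - 1) : ℝ × Matrix (Fin r) (Fin r) ℂ) ∈ C := by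
          refine ⟨fun j => if j = i then c else 0, fun j => by dsimp only; split <;> simp [hc], ?_, ?_⟩
          · show c * η i ≤ _
            have hs : ∑ j : Fin m, η j * (if j = i then c else 0) = η i * c := by
              simp [mul_ite, Finset.sum_ite_eq']
            rw [hs, mul_comm]
          · show ((c • Qop Φ i - 1 : Matrix (Fin r) (Fin r) ℂ) + 1
                - ∑ j : Fin m, ((if j = i then c else 0 : ℝ) : ℂ) • Qop Φ j).PosSemidef
            have hs : ∑ j : Fin m, ((if j = i then c else 0 : ℝ) : ℂ) • Qop Φ j
                = (c : ℂ) • Qop Φ i := by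
              simp [apply_ite (fun t : ℝ => (t : ℂ)), ite_smul, Finset.sum_ite_eq']
            rw [hs, sub_add_cancel, rsmul_eq, sub_self]
            exact Matrix.PosSemidef.zero
        have h1 := hfC _ hmemc
        have h2 : f (((c * η i : ℝ), c • Qop Φ i - 1) : ℝ × Matrix (Fin r) (Fin r) ℂ)
            = c * (η i * α + g' (Qop Φ i)) + g' (-1) := by
          rw [hfsplit]
          have h3 : (c • Qop Φ i - 1 : Matrix (Fin r) (Fin r) ℂ) = c • Qop Φ i + (-1) := by
            rw [sub_eq_add_neg]
          rw [h3, _root_.map_add, _root_.map_smul, smul_eq_mul]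
          ring
        rw [h2] at h1
        exact h1
      exact le_zero_of_forall_lin key
    have hg'1 : g' (-1) < u := by
      have hmemc := hmem0 0 le_rfl (-1 : Matrix (Fin r) (Fin r) ℂ)
        (by simpa using (Matrix.PosSemidef.zero (n := Fin r) (R := ℂ)))
      have h1 := hfC _ hmemc
      rw [hfsplit] at h1
      simpa using h1
    set h' : Matrix (Fin r) (Fin r) ℂ →ₗ[ℝ] ℝ := -g' with hh'def
    have hh'app : ∀ M : Matrix (Fin r) (Fin r) ℂ, h' M = - g' M := fun M => rfl
    set Y : Matrix (Fin r) (Fin r) ℂ := Matrix.of (fun a b =>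
      (h' (Matrix.single b a 1) : ℂ) - Complex.I * (h' (Matrix.single b a Complex.I) : ℂ))
      with hYdef
    have hYapp : ∀ a b, Y a b = (h' (Matrix.single b a 1) : ℂ)
        - Complex.I * (h' (Matrix.single b a Complex.I) : ℂ) := fun a b => rfl
    have hrep : ∀ M : Matrix (Fin r) (Fin r) ℂ, (Matrix.trace (Y * M)).re = h' M := by
      intro M
      have lhs1 : (Matrix.trace (Y * M)).re = ∑ a : Fin r, ∑ b : Fin r, (Y a b * M b a).re := by
        simp [Matrix.trace, Matrix.diag, Matrix.mul_apply, Complex.re_sum]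
      have entry : ∀ a b, (Y a b * M b a).re = h' (Matrix.single b a (M b a)) := by
        intro a b
        have hdecomp : Matrix.single b a (M b a)
            = (M b a).re • Matrix.single b a (1:ℂ)
              + (M b a).im • Matrix.single b a Complex.I := by
          rw [Matrix.smul_single, Matrix.smul_single, ← Matrix.single_add,
            Complex.real_smul, Complex.real_smul, mul_one, Complex.re_add_im]
        rw [hdecomp, _root_.map_add, _root_.map_smul, _root_.map_smul, hYapp, re_aux]
        simp only [smul_eq_mul]
        ring
      rw [lhs1]
      simp only [entry]
      rw [Finset.sum_comm]
      conv_rhs => rw [matrix_eq_sum_single M]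
      rw [_root_.map_sum]
      exact Finset.sum_congr rfl fun b _ => (_root_.map_sum h' _ _).symm
    set W : Matrix (Fin r) (Fin r) ℂ := (2⁻¹ : ℂ) • (Y + Yᴴ) with hWdef
    have hWherm : W.IsHermitian := by
      show Wᴴ = W
      rw [hWdef, conjTranspose_smul, conjTranspose_add, conjTranspose_conjTranspose]
      have h1 : star (2⁻¹ : ℂ) = (2⁻¹ : ℂ) := by simp
      rw [h1, add_comm]
    have hWrep : ∀ M : Matrix (Fin r) (Fin r) ℂ, Mᴴ = M → (Matrix.trace (W * M)).re = h' M := by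
      intro M hMh
      have h1 : Matrix.trace (Yᴴ * M) = star (Matrix.trace (Y * M)) := by
        have h2 : Yᴴ * M = (Mᴴ * Y)ᴴ := by rw [conjTranspose_mul, conjTranspose_conjTranspose]
        rw [h2, Matrix.trace_conjTranspose, hMh, Matrix.trace_mul_comm]
      have h3 : Matrix.trace (W * M) = ((Matrix.trace (Y * M)).re : ℂ) := by
        rw [hWdef, Matrix.smul_mul, Matrix.add_mul, Matrix.trace_smul, Matrix.trace_add, h1,
          smul_eq_mul, Complex.star_def, Complex.add_conj]
        push_cast
        ring
      rw [h3, Complex.ofReal_re, hrep]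
    have hquadW : ∀ x : Fin r → ℂ,
        star x ⬝ᵥ (W *ᵥ x) = Matrix.trace (W * vecMulVec x (star x)) := by
      intro x
      rw [Matrix.trace_mul_comm, trace_vecMulVec_mul]
    have hWpsd : W.PosSemidef := by
      refine PosSemidef.of_dotProduct_mulVec_nonneg hWherm fun x => ?_
      rw [complex_nonneg_iff]
      constructor
      · rw [hquadW, hWrep _ (psd_vecMulVec x).1, hh'app]
        have := hg'V x
        linarith
      · have hsc : star (star x ⬝ᵥ (W *ᵥ x)) = star x ⬝ᵥ (W *ᵥ x) := by
          rw [star_dot_swap, Matrix.star_mulVec, hWherm.eq, ← Matrix.dotProduct_mulVec]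
        rw [← Complex.conj_eq_iff_im, ← Complex.star_def]
        exact hsc
    have hWQ : ∀ i : Fin m, α * η i ≤ (Matrix.trace (W * Qop Φ i)).re := by
      intro i
      rw [hWrep _ (hQherm i), hh'app]
      have h1 := hg'Q i
      have h2 : α * η i = η i * α := mul_comm _ _
      rw [h2]
      linarith
    have htrWlt : (Matrix.trace W).re < u := by
      have h1 := hWrep 1 (conjTranspose_one)
      rw [Matrix.mul_one] at h1
      rw [h1, hh'app]
      have h2 : - g' (1 : Matrix (Fin r) (Fin r) ℂ) = g' (-1) := by
        rw [_root_.map_neg]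
      rw [h2]
      exact hg'1
    have hu2 : u < (v + ε) * α := by
      have h1 := hfpt
      rw [hfsplit, _root_.map_zero] at h1
      simpa using h1
    have hαpos : 0 < α := by
      rcases lt_or_eq_of_le hα0 with h | h
      · exact h
      · exfalso
        have h0 : (Matrix.trace W).re < 0 := by
          have h1 := htrWlt.trans hu2
          rw [← h] at h1
          simpa using h1
        exact absurd (psd_trace_re_nonneg hWpsd) (not_le.mpr h0)
    refine ⟨(Matrix.trace (((α⁻¹ : ℝ) : ℂ) • W)).re,
      ⟨((α⁻¹ : ℝ) : ℂ) • W, psd_smul hWpsd (inv_nonneg.mpr hα0), ?_, rfl⟩, ?_⟩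
    · intro i
      have h1 : Matrix.trace (Qop Φ i * (((α⁻¹ : ℝ) : ℂ) • W))
          = ((α⁻¹ : ℝ) : ℂ) * Matrix.trace (Qop Φ i * W) := by
        rw [Matrix.mul_smul, Matrix.trace_smul, smul_eq_mul]
      rw [h1, Complex.re_ofReal_mul, Matrix.trace_mul_comm]
      have h2 := hWQ i
      calc η i = α⁻¹ * (α * η i) := by field_simp
        _ ≤ α⁻¹ * (Matrix.trace (W * Qop Φ i)).re :=
            mul_le_mul_of_nonneg_left h2 (inv_nonneg.mpr hα0)
    · have h1 : Matrix.trace (((α⁻¹ : ℝ) : ℂ) • W) = ((α⁻¹ : ℝ) : ℂ) * Matrix.trace W := by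
        rw [Matrix.trace_smul, smul_eq_mul]
      rw [h1, Complex.re_ofReal_mul]
      have h2 : (Matrix.trace W).re < (v + ε) * α := htrWlt.trans hu2
      calc α⁻¹ * (Matrix.trace W).re < α⁻¹ * ((v + ε) * α) :=
            mul_lt_mul_of_pos_left h2 (inv_pos.mpr hαpos)
        _ = v + ε := by field_simp
  have hTne : T.Nonempty := by
    obtain ⟨x, hx, _⟩ := strong 1 one_pos
    exact ⟨x, hx⟩
  have hTbdd : BddBelow T := ⟨0, fun x hx => hTlb x hx⟩
  have le1 : sSup S ≤ sInf T :=
    le_csInf hTne fun xT hxT => csSup_le ⟨0, hS0⟩ fun xS hxS => weak xT hxT xS hxS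
  have le2 : sInf T ≤ sSup S := by
    refine le_of_forall_pos_le_add ?_
    intro ε hε
    obtain ⟨x, hxT, hxlt⟩ := strong ε hε
    exact (csInf_le hTbdd hxT).trans hxlt.le
  exact le_antisymm le1 le2
end
end

section
/- (Theorem 2, part 3.) For any complex r×m matrix Φ with linearly independent columns there exist prior probabilities η_1,…,η_m (η_i ≥ 0, Σ_i η_i = 1) for which the equal-probability measurement is optimal; i.e. there exists η with η_i ≥ 0 and Σ_i η_i = 1 such that Σ_i η_i p_i ≤ λ_min for every p ∈ ℝ^m with p_i ≥ 0 and I_r − Σ_i p_i Q_i positive semidefinite. -/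
open Matrix BigOperators ComplexOrder

noncomputable section

/-!
Take an eigenvector `u` of the Gram matrix `G = ΦᴴΦ` for `λ_min` and put `η_i = |u_i|² / ‖u‖²`.
Since `Φ̃ᴴΦ = G⁻¹G = 1`, the vector `v = Φu` satisfies `φ̃_iᴴ v = u_i`, so `vᴴ Q_i v = |u_i|²`, while
`vᴴ v = uᴴ G u = λ_min ‖u‖²`. Testing `I - Σ p_i Q_i ⪰ 0` against `v` gives
`Σ p_i |u_i|² ≤ λ_min ‖u‖²`.
-/

namespace Matrix

variable {n : Type*} [Fintype n]

lemma re_star_dotProduct_self (w : n → ℂ) :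
    (star w ⬝ᵥ w).re = ∑ i, Complex.normSq (w i) := by
  simp [dotProduct, Complex.re_sum, Complex.normSq_apply]

lemma star_dotProduct_vecMulVec_star_mulVec (a w : n → ℂ) :
    star w ⬝ᵥ vecMulVec a (star a) *ᵥ w = Complex.normSq (star a ⬝ᵥ w) := by
  rw [vecMulVec_mulVec, op_smul_eq_smul, dotProduct_smul, smul_eq_mul, ← Complex.mul_conj,
    Complex.star_def.symm, star_dotProduct, star_star, mul_comm]

lemma star_mulVec_dotProduct_mulVec_of_mulVec_eq_smul {R : Type*} [CommRing R] [StarRing R]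
    {k : Type*} [Fintype k] (A : Matrix k n R) {u : n → R} {c : R}
    (hu : (Aᴴ * A) *ᵥ u = c • u) :
    star (A *ᵥ u) ⬝ᵥ A *ᵥ u = c * (star u ⬝ᵥ u) := by
  rw [dotProduct_mulVec, star_mulVec, vecMul_vecMul, ← dotProduct_mulVec, hu, dotProduct_smul,
    smul_eq_mul]

end Matrix

section

variable {r m : ℕ} {Φ : Matrix (Fin r) (Fin m) ℂ}

lemma conjTranspose_reciprocal_mul_self
    (hind : LinearIndependent ℂ (fun i : Fin m => fun j : Fin r => Φ j i)) :
    (reciprocal Φ)ᴴ * Φ = 1 := by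
  have hG : (Φᴴ * Φ).PosDef := .conjTranspose_mul_self Φ (mulVec_injective_iff.mpr hind)
  rw [reciprocal, conjTranspose_mul, conjTranspose_nonsing_inv, hG.isHermitian.eq, Matrix.mul_assoc,
    nonsing_inv_mul _ ((isUnit_iff_isUnit_det _).mp hG.isUnit)]

lemma star_dotProduct_Qop_mulVec (i : Fin m) (w : Fin r → ℂ) :
    star w ⬝ᵥ Qop Φ i *ᵥ w = Complex.normSq (((reciprocal Φ)ᴴ *ᵥ w) i) :=
  star_dotProduct_vecMulVec_star_mulVec _ _

lemma PrimalFeasible.sum_mul_normSq_le {p : Fin m → ℝ} (hp : PrimalFeasible Φ p)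
    (w : Fin r → ℂ) :
    ∑ i, p i * Complex.normSq (((reciprocal Φ)ᴴ *ᵥ w) i) ≤ ∑ j, Complex.normSq (w j) := by
  have h := hp.2.dotProduct_mulVec_nonneg w
  simp only [sub_mulVec, dotProduct_sub, one_mulVec, sum_mulVec, dotProduct_sum, smul_mulVec,
    dotProduct_smul, star_dotProduct_Qop_mulVec] at h
  simpa only [smul_eq_mul, Complex.sub_re, re_star_dotProduct_self, Complex.re_sum, Complex.mul_re,
    Complex.ofReal_re, Complex.ofReal_im, mul_zero, sub_zero, sub_nonneg]
    using (Complex.nonneg_iff.mp h).1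

end

theorem stmt_11_general (m r : ℕ)
    (Φ : Matrix (Fin r) (Fin m) ℂ)
    (hind : LinearIndependent ℂ (fun i : Fin m => fun j : Fin r => Φ j i))
    (lam : ℝ)
    -- `lam` is the smallest eigenvalue of the Gram matrix `ΦᴴΦ`:
    (hev : ∃ u : Fin m → ℂ, u ≠ 0 ∧ (Φᴴ * Φ).mulVec u = (lam : ℂ) • u) :
    ∃ η : Fin m → ℝ, (∀ i, 0 ≤ η i) ∧ (∑ i : Fin m, η i = 1) ∧
      ∀ p : Fin m → ℝ, PrimalFeasible Φ p → ∑ i : Fin m, η i * p i ≤ lam := by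
  obtain ⟨u, hu0, hGu⟩ := hev
  have hs : 0 < ∑ i, Complex.normSq (u i) := by
    rw [← re_star_dotProduct_self]
    exact (Complex.pos_iff.mp (dotProduct_star_self_pos_iff.mpr hu0)).1
  set s := ∑ i, Complex.normSq (u i)
  refine ⟨fun i => Complex.normSq (u i) / s, fun i => div_nonneg (Complex.normSq_nonneg _) hs.le,
    by rw [← Finset.sum_div, div_self hs.ne'], fun p hp => ?_⟩
  have hΦu : ∑ j, Complex.normSq ((Φ *ᵥ u) j) = lam * s := by
    rw [← re_star_dotProduct_self, star_mulVec_dotProduct_mulVec_of_mulVec_eq_smul Φ hGu,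
      Complex.re_ofReal_mul, re_star_dotProduct_self]
  have hbound := hp.sum_mul_normSq_le (Φ *ᵥ u)
  rw [mulVec_mulVec, conjTranspose_reciprocal_mul_self hind, one_mulVec, hΦu] at hbound
  calc ∑ i, Complex.normSq (u i) / s * p i = (∑ i, p i * Complex.normSq (u i)) / s := by
        rw [Finset.sum_div]; exact Finset.sum_congr rfl fun i _ => by ring
    _ ≤ lam * s / s := by gcongr
    _ = lam := mul_div_cancel_right₀ lam hs.ne'

theorem stmt_11 (m r : ℕ) (hm : 0 < m) (hmr : m ≤ r)
    (Φ : Matrix (Fin r) (Fin m) ℂ)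
    (hind : LinearIndependent ℂ (fun i : Fin m => fun j : Fin r => Φ j i))
    (lam : ℝ)
    -- `lam` is the smallest eigenvalue of the Gram matrix `ΦᴴΦ`:
    (hev : ∃ u : Fin m → ℂ, u ≠ 0 ∧ (Φᴴ * Φ).mulVec u = (lam : ℂ) • u)
    (hmin : ((Φᴴ * Φ) - (lam : ℂ) • 1).PosSemidef) :
    ∃ η : Fin m → ℝ, (∀ i, 0 ≤ η i) ∧ (∑ i : Fin m, η i = 1) ∧
      ∀ p : Fin m → ℝ, PrimalFeasible Φ p → ∑ i : Fin m, η i * p i ≤ lam :=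
  stmt_11_general m r Φ hind lam hev
end
end

section
/- (Theorem 4.) For a geometrically uniform state set with linearly independent states and equal prior probabilities η_g = 1/|G|, the equal-probability measurement minimizes the probability of an inconclusive result: the constant vector p_g = λ_min is primal feasible, and for every primal feasible p one has (1/|G|)·Σ_{g∈G} p_g ≤ λ_min, where λ_min is the smallest eigenvalue of the Gram matrix ΦᴴΦ. -/
open Matrix BigOperators ComplexOrder

noncomputable section

/-- The matrix whose column indexed by `g` is the state `ρ(g) φ`. -/
def guMatrix {G : Type*} [Group G] [Fintype G] (n : ℕ)
    (ρ : G →* Matrix.unitaryGroup (Fin n) ℂ) (φ : Fin n → ℂ) :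
    Matrix (Fin n) G ℂ :=
  Matrix.of fun j g => ((ρ g : Matrix (Fin n) (Fin n) ℂ).mulVec φ) j

/-- The reciprocal states: columns of `Φ (ΦᴴΦ)⁻¹`. -/
def guReciprocal {G : Type*} [Group G] [Fintype G] [DecidableEq G] (n : ℕ)
    (ρ : G →* Matrix.unitaryGroup (Fin n) ℂ) (φ : Fin n → ℂ) :
    Matrix (Fin n) G ℂ :=
  guMatrix n ρ φ * ((guMatrix n ρ φ)ᴴ * guMatrix n ρ φ)⁻¹

/-- The rank-one operator `Q_g = φ̃_g φ̃_gᴴ`. -/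
def guQop {G : Type*} [Group G] [Fintype G] [DecidableEq G] (n : ℕ)
    (ρ : G →* Matrix.unitaryGroup (Fin n) ℂ) (φ : Fin n → ℂ) (g : G) :
    Matrix (Fin n) (Fin n) ℂ :=
  vecMulVec (fun a => guReciprocal n ρ φ a g) (fun b => star (guReciprocal n ρ φ b g))

/-- Primal feasibility for the GU unambiguous-discrimination SDP. -/
def guPrimalFeasible {G : Type*} [Group G] [Fintype G] [DecidableEq G] (n : ℕ)
    (ρ : G →* Matrix.unitaryGroup (Fin n) ℂ) (φ : Fin n → ℂ) (p : G → ℝ) : Prop :=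
  (∀ g, 0 ≤ p g) ∧
    ((1 : Matrix (Fin n) (Fin n) ℂ) - ∑ g : G, (p g : ℂ) • guQop n ρ φ g).PosSemidef

/-! With `B = Φ (ΦᴴΦ)⁻¹` one has `BᴴΦ = 1` and `B (ΦᴴΦ) Bᴴ ≤ 1`, so conjugation identifies the
Loewner bounds `D ≤ ΦᴴΦ` and `B D Bᴴ ≤ 1`: a weight vector `p` is primal feasible iff
`diag p ≤ ΦᴴΦ`. For `p ≡ λ_min` this is the minimality of `λ_min`. Conversely, the Gram matrix of a
geometrically uniform state set is invariant under simultaneous left translation of rows and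
columns, so every translate of a feasible `p` is feasible; averaging over `G` gives
`mean p • 1 ≤ ΦᴴΦ`, and testing this on an eigenvector for `λ_min` gives `mean p ≤ λ_min`. -/

namespace Matrix

variable {m ι : Type*} [Fintype ι] [DecidableEq ι]

lemma sum_smul_vecMulVec_col (B : Matrix m ι ℂ) (c : ι → ℂ) :
    ∑ g, c g • vecMulVec (fun a => B a g) (fun b => star (B b g)) = B * diagonal c * Bᴴ := by
  ext a b
  simp only [sum_apply, smul_apply, vecMulVec_apply, mul_apply, diagonal_apply, mul_ite, mul_zero,
    Finset.sum_ite_eq', Finset.mem_univ, if_true, conjTranspose_apply, smul_eq_mul]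
  exact Finset.sum_congr rfl fun g _ => by ring

variable [Fintype m]

lemma conjTranspose_mul_inv_gram_mul_self {Φ : Matrix m ι ℂ} (hA : IsUnit (Φᴴ * Φ)) :
    (Φ * (Φᴴ * Φ)⁻¹)ᴴ * Φ = 1 := by
  rw [conjTranspose_mul, (isHermitian_conjTranspose_mul_self Φ).inv.eq, Matrix.mul_assoc,
    nonsing_inv_mul _ ((isUnit_iff_isUnit_det _).mp hA)]

variable [DecidableEq m]

lemma posSemidef_one_sub_mul_inv_gram_mul_conjTranspose {Φ : Matrix m ι ℂ}
    (hA : IsUnit (Φᴴ * Φ)) : (1 - Φ * (Φᴴ * Φ)⁻¹ * Φᴴ).PosSemidef := by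
  have hΦB : Φᴴ * (Φ * (Φᴴ * Φ)⁻¹) = 1 := by
    simpa using congrArg (·ᴴ) (conjTranspose_mul_inv_gram_mul_self hA)
  set P := Φ * (Φᴴ * Φ)⁻¹ * Φᴴ
  have hP : Pᴴ = P := by
    simp only [P, conjTranspose_mul, conjTranspose_conjTranspose,
      (isHermitian_conjTranspose_mul_self Φ).inv.eq, Matrix.mul_assoc]
  have hPP : P * P = P := by
    rw [Matrix.mul_assoc _ Φᴴ P, ← Matrix.mul_assoc Φᴴ, hΦB, Matrix.one_mul]
  have : 1 - P = (1 - P)ᴴ * (1 - P) := by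
    rw [conjTranspose_sub, conjTranspose_one, hP, sub_mul, mul_sub, mul_sub, hPP]
    simp
  rw [this]
  exact posSemidef_conjTranspose_mul_self _

lemma posSemidef_one_sub_reciprocal_iff {Φ : Matrix m ι ℂ} (hA : IsUnit (Φᴴ * Φ))
    (D : Matrix ι ι ℂ) :
    (1 - Φ * (Φᴴ * Φ)⁻¹ * D * (Φ * (Φᴴ * Φ)⁻¹)ᴴ).PosSemidef ↔ (Φᴴ * Φ - D).PosSemidef := by
  have hBΦ := conjTranspose_mul_inv_gram_mul_self hA
  set B := Φ * (Φᴴ * Φ)⁻¹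
  have hΦB : Φᴴ * B = 1 := by simpa using congrArg (·ᴴ) hBΦ
  constructor
  · intro h
    convert h.conjTranspose_mul_mul_same Φ using 1
    rw [Matrix.mul_sub, Matrix.sub_mul, Matrix.mul_one]
    simp only [← Matrix.mul_assoc, hΦB, Matrix.one_mul]
    rw [Matrix.mul_assoc, hBΦ, Matrix.mul_one]
  · intro h
    have hBA : B * (Φᴴ * Φ) = Φ := by
      rw [Matrix.mul_assoc, nonsing_inv_mul _ ((isUnit_iff_isUnit_det _).mp hA), Matrix.mul_one]
    have hP : B * (Φᴴ * Φ) * Bᴴ = Φ * (Φᴴ * Φ)⁻¹ * Φᴴ := by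
      rw [hBA, conjTranspose_mul, (isHermitian_conjTranspose_mul_self Φ).inv.eq, Matrix.mul_assoc]
    have : 1 - B * D * Bᴴ = (1 - Φ * (Φᴴ * Φ)⁻¹ * Φᴴ) + B * (Φᴴ * Φ - D) * Bᴴ := by
      rw [Matrix.mul_sub, Matrix.sub_mul, hP]
      abel
    rw [this]
    exact (posSemidef_one_sub_mul_inv_gram_mul_conjTranspose hA).add
      (h.mul_mul_conjTranspose_same B)

lemma PosSemidef.le_of_mulVec_eq_smul {A : Matrix ι ι ℂ} {c μ : ℝ} (h : (A - (c : ℂ) • 1).PosSemidef) {v : ι → ℂ}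
    (hv : A *ᵥ v = (μ : ℂ) • v) (hv0 : v ≠ 0) : c ≤ μ := by
  have hq := h.dotProduct_mulVec_nonneg v
  rw [sub_mulVec, hv, smul_mulVec, one_mulVec, ← sub_smul, dotProduct_smul, smul_eq_mul,
    ← Complex.ofReal_sub] at hq
  have hpos : 0 < star v ⬝ᵥ v := dotProduct_star_self_pos_iff.mpr hv0
  have := div_nonneg hq hpos.le
  rw [mul_div_cancel_right₀ _ hpos.ne'] at this
  exact sub_nonneg.mp (Complex.zero_le_real.mp this)

lemma PosSemidef.sub_mean_smul_one_of_submatrix_mul_left {G : Type*} [Group G] [Fintype G] [DecidableEq G]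
    {A : Matrix G G ℂ} (hA : ∀ k : G, A.submatrix (k * ·) (k * ·) = A) {c : G → ℂ}
    (h : (A - diagonal c).PosSemidef) :
    (A - ((Fintype.card G : ℂ)⁻¹ * ∑ g, c g) • 1).PosSemidef := by
  have hk (k : G) : (A - diagonal fun g => c (k * g)).PosSemidef := by
    simpa [submatrix_sub, hA k, submatrix_diagonal _ _ (mul_right_injective k), Function.comp_def]
      using h.submatrix (k * ·)
  have hsum := (posSemidef_sum Finset.univ fun k _ => hk k).smul
    (inv_nonneg.mpr (Nat.cast_nonneg (α := ℂ) (Fintype.card G)))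
  have hdiag : ∑ k, diagonal (fun g => c (k * g)) = (∑ g, c g) • (1 : Matrix G G ℂ) := by
    ext i j
    by_cases hij : i = j
    · subst hij
      simpa [sum_apply] using Fintype.sum_equiv (Equiv.mulRight i) _ _ fun _ => rfl
    · simp [sum_apply, hij]
  have hcard : (Fintype.card G : ℂ) ≠ 0 := Nat.cast_ne_zero.mpr Fintype.card_ne_zero
  rw [Finset.sum_sub_distrib, hdiag, Finset.sum_const, Finset.card_univ, ← Nat.cast_smul_eq_nsmul ℂ,
    smul_sub, smul_smul, inv_mul_cancel₀ hcard, one_smul, smul_smul] at hsum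
  exact hsum

end Matrix

lemma guMatrix_submatrix_mul_left {G : Type*} [Group G] [Fintype G] {n : ℕ}
    (ρ : G →* Matrix.unitaryGroup (Fin n) ℂ) (φ : Fin n → ℂ) (k : G) :
    (guMatrix n ρ φ).submatrix id (k * ·) = (ρ k : Matrix (Fin n) (Fin n) ℂ) * guMatrix n ρ φ := by
  ext j g
  simp only [submatrix_apply, id, guMatrix, of_apply, map_mul, Submonoid.coe_mul, mul_apply,
    mulVec, dotProduct, Finset.sum_mul, Finset.mul_sum, mul_assoc]
  exact Finset.sum_comm

lemma gram_guMatrix_submatrix_mul_left {G : Type*} [Group G] [Fintype G] {n : ℕ}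
    (ρ : G →* Matrix.unitaryGroup (Fin n) ℂ) (φ : Fin n → ℂ) (k : G) :
    ((guMatrix n ρ φ)ᴴ * guMatrix n ρ φ).submatrix (k * ·) (k * ·)
      = (guMatrix n ρ φ)ᴴ * guMatrix n ρ φ := by
  rw [submatrix_mul _ _ _ id _ Function.bijective_id, ← conjTranspose_submatrix,
    guMatrix_submatrix_mul_left, conjTranspose_mul, Matrix.mul_assoc,
    ← Matrix.mul_assoc (ρ k : Matrix (Fin n) (Fin n) ℂ)ᴴ, ← star_eq_conjTranspose,
    UnitaryGroup.star_mul_self, Matrix.one_mul]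

lemma isUnit_gram_guMatrix {G : Type*} [Group G] [Fintype G] [DecidableEq G] {n : ℕ}
    (ρ : G →* Matrix.unitaryGroup (Fin n) ℂ) (φ : Fin n → ℂ)
    (hind : LinearIndependent ℂ (fun g : G => (ρ g : Matrix (Fin n) (Fin n) ℂ).mulVec φ)) :
    IsUnit ((guMatrix n ρ φ)ᴴ * guMatrix n ρ φ) :=
  (PosDef.conjTranspose_mul_self _ (mulVec_injective_iff.mpr hind)).isUnit

lemma guPrimalFeasible_iff {G : Type*} [Group G] [Fintype G] [DecidableEq G] {n : ℕ}
    (ρ : G →* Matrix.unitaryGroup (Fin n) ℂ) (φ : Fin n → ℂ)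
    (hind : LinearIndependent ℂ (fun g : G => (ρ g : Matrix (Fin n) (Fin n) ℂ).mulVec φ))
    (p : G → ℝ) :
    guPrimalFeasible n ρ φ p ↔ (∀ g, 0 ≤ p g) ∧
      ((guMatrix n ρ φ)ᴴ * guMatrix n ρ φ - diagonal fun g => (p g : ℂ)).PosSemidef := by
  simp only [guPrimalFeasible, guQop, sum_smul_vecMulVec_col, guReciprocal,
    posSemidef_one_sub_reciprocal_iff (isUnit_gram_guMatrix ρ φ hind)]

theorem stmt_15 {G : Type*} [Group G] [Fintype G] [DecidableEq G] (n : ℕ)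
    (ρ : G →* Matrix.unitaryGroup (Fin n) ℂ) (φ : Fin n → ℂ)
    (hind : LinearIndependent ℂ (fun g : G => (ρ g : Matrix (Fin n) (Fin n) ℂ).mulVec φ))
    (lam : ℝ)
    -- `lam` is the smallest eigenvalue of the Gram matrix `ΦᴴΦ`:
    (hev : ∃ u : G → ℂ, u ≠ 0 ∧
      ((guMatrix n ρ φ)ᴴ * guMatrix n ρ φ).mulVec u = (lam : ℂ) • u)
    (hmin : (((guMatrix n ρ φ)ᴴ * guMatrix n ρ φ) - (lam : ℂ) • 1).PosSemidef) :
    guPrimalFeasible n ρ φ (fun _ => lam) ∧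
      ∀ p : G → ℝ, guPrimalFeasible n ρ φ p →
        (1 / (Fintype.card G : ℝ)) * ∑ g : G, p g ≤ lam := by
  obtain ⟨u, hu0, hu⟩ := hev
  have hgram : ((guMatrix n ρ φ)ᴴ * guMatrix n ρ φ - ((0 : ℝ) : ℂ) • 1).PosSemidef := by
    simpa using posSemidef_conjTranspose_mul_self (guMatrix n ρ φ)
  have hlam : 0 ≤ lam := hgram.le_of_mulVec_eq_smul hu hu0
  refine ⟨(guPrimalFeasible_iff ρ φ hind _).mpr ⟨fun _ => hlam, ?_⟩, fun p hp => ?_⟩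
  · rwa [← smul_one_eq_diagonal]
  have hmean := ((guPrimalFeasible_iff ρ φ hind p).mp hp).2.sub_mean_smul_one_of_submatrix_mul_left
    (gram_guMatrix_submatrix_mul_left ρ φ)
  rw [show (Fintype.card G : ℂ)⁻¹ * ∑ g, (p g : ℂ) = ((1 / (Fintype.card G : ℝ) * ∑ g, p g : ℝ) : ℂ)
    by push_cast; ring] at hmean
  exact hmean.le_of_mulVec_eq_smul hu hu0
end
end

section
/- (Theorem 5, part 2a.) Consider a compound geometrically uniform state set with geometrically uniform generators, where the two representations commute up to a phase factor: for all g ∈ G and k ∈ Q there exists θ(g,k) ∈ ℝ with ρ(g)τ(k) = e^{iθ(g,k)} τ(k)ρ(g). If the states φ_{g,k} = ρ(g)τ(k)φ are linearly independent, then there exists a single vector φ̄ ∈ ℂ^n such that for every (g,k), the column of Φ̃ = Φ(ΦᴴΦ)⁻¹ indexed by (g,k) equals ρ(g)τ(k)φ̄; that is, the reciprocal states form a compound geometrically uniform set with geometrically uniform generators τ(k)φ̄. -/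
/-
For fixed `(g, k)`, the unitary `U = ρ(g) τ(k)` permutes the states up to phases:
`U Φ = Φ M` with `M` the unitary monomial matrix of left translation by `(g, k)` on `G × Q`,
weighted by the phases from the commutation relation. Then `Mᴴ (ΦᴴΦ) M = Φᴴ Uᴴ U Φ = ΦᴴΦ`,
so `M` commutes with the Gram matrix and with its inverse, whence `U Φ̃ = Φ̃ M`.
Reading off the column `(1, 1)` gives `φ̃_(g,k) = U φ̃_(1,1)`.
-/

open Matrix BigOperators ComplexOrder

noncomputable section

/-- The matrix whose column indexed by `(g, k)` is the state `ρ(g) τ(k) φ`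
(a CGU state set with GU generators). -/
def cguMatrix {G Q : Type*} [Group G] [Fintype G] [Group Q] [Fintype Q] (n : ℕ)
    (ρ : G →* Matrix.unitaryGroup (Fin n) ℂ) (τ : Q →* Matrix.unitaryGroup (Fin n) ℂ)
    (φ : Fin n → ℂ) : Matrix (Fin n) (G × Q) ℂ :=
  Matrix.of fun j gk =>
    (((ρ gk.1 : Matrix (Fin n) (Fin n) ℂ) * (τ gk.2 : Matrix (Fin n) (Fin n) ℂ)).mulVec φ) j

namespace Matrix

variable {R m ι : Type*} [CommRing R] [Fintype m] [Fintype ι] [DecidableEq ι]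

theorem commute_nonsing_inv_left {A M : Matrix ι ι R} (h : Commute A M) : Commute A⁻¹ M := by
  by_cases hA : IsUnit A.det
  · calc A⁻¹ * M = A⁻¹ * (M * A) * A⁻¹ := by
          rw [Matrix.mul_assoc, Matrix.mul_assoc, mul_nonsing_inv A hA, Matrix.mul_one]
      _ = A⁻¹ * A * (M * A⁻¹) := by rw [← h.eq]; simp only [Matrix.mul_assoc]
      _ = M * A⁻¹ := by rw [nonsing_inv_mul A hA, Matrix.one_mul]
  · rw [nonsing_inv_apply_not_isUnit A hA]
    exact Commute.zero_left M

variable [StarRing R]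

def reciprocalStates (Φ : Matrix m ι R) : Matrix m ι R := Φ * (Φᴴ * Φ)⁻¹

variable [DecidableEq m]

theorem commute_gram_of_mul_eq_mul {Φ : Matrix m ι R} {U : Matrix m m R} {M : Matrix ι ι R}
    (hU : Uᴴ * U = 1) (hM : M * Mᴴ = 1) (h : U * Φ = Φ * M) : Commute (Φᴴ * Φ) M := by
  have hinv : Mᴴ * (Φᴴ * Φ) * M = Φᴴ * Φ :=
    calc Mᴴ * (Φᴴ * Φ) * M = (Φ * M)ᴴ * (Φ * M) := by
          simp only [conjTranspose_mul, Matrix.mul_assoc]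
      _ = Φᴴ * (Uᴴ * U) * Φ := by rw [← h, conjTranspose_mul]; simp only [Matrix.mul_assoc]
      _ = Φᴴ * Φ := by rw [hU, Matrix.mul_one]
  calc Φᴴ * Φ * M = M * Mᴴ * (Φᴴ * Φ) * M := by rw [hM, Matrix.one_mul]
    _ = M * (Mᴴ * (Φᴴ * Φ) * M) := by simp only [Matrix.mul_assoc]
    _ = M * (Φᴴ * Φ) := by rw [hinv]

theorem mul_reciprocalStates_of_mul_eq_mul {Φ : Matrix m ι R} {U : Matrix m m R}
    {M : Matrix ι ι R} (hU : Uᴴ * U = 1) (hM : M * Mᴴ = 1) (h : U * Φ = Φ * M) :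
    U * reciprocalStates Φ = reciprocalStates Φ * M := by
  have hcomm := commute_nonsing_inv_left (commute_gram_of_mul_eq_mul hU hM h)
  rw [reciprocalStates, ← Matrix.mul_assoc, h, Matrix.mul_assoc, ← hcomm.eq, Matrix.mul_assoc]

end Matrix

section PhaseShift

variable {R Γ : Type*} [CommRing R] [Group Γ] [Fintype Γ] [DecidableEq Γ]

def phaseShift (γ : Γ) (c : Γ → R) : Matrix Γ Γ R :=
  Matrix.of fun x y => if x = γ * y then c y else 0

theorem mul_phaseShift_apply {m : Type*} (B : Matrix m Γ R) (γ : Γ) (c : Γ → R) (j : m) (y : Γ) :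
    (B * phaseShift γ c) j y = B j (γ * y) * c y := by
  simp [Matrix.mul_apply, phaseShift]

theorem phaseShift_mul_conjTranspose [StarRing R] {γ : Γ} {c : Γ → R}
    (hc : ∀ y, star (c y) * c y = 1) :
    phaseShift γ c * (phaseShift γ c)ᴴ = 1 := by
  refine mul_eq_one_comm.mp ?_
  ext x z
  by_cases hxz : x = z
  · subst hxz
    simp [Matrix.mul_apply, phaseShift, hc]
  · simp [Matrix.mul_apply, phaseShift, hxz, Ne.symm hxz]

end PhaseShift

theorem exists_phase_of_commute_up_to_phase {G m : Type*} [Group G] [Fintype m] [DecidableEq m]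
    (A : G → Matrix m m ℂ) (hA : A 1 = 1) (T : Matrix m m ℂ)
    (h : ∀ g, ∃ θ : ℝ, A g * T = Complex.exp (θ * Complex.I) • (T * A g)) :
    ∃ c : G → ℂ, c 1 = 1 ∧ (∀ g, star (c g) * c g = 1) ∧ ∀ g, T * A g = c g • (A g * T) := by
  classical
  choose θ hθ using h
  -- at `g = 1` the phase supplied by `h` is arbitrary when `T = 0`, so it is fixed to `1`
  refine ⟨fun g => if g = 1 then 1 else Complex.exp (-θ g * Complex.I), by simp, fun g => ?_,
    fun g => ?_⟩
  · beta_reduce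
    split_ifs
    · simp
    · simp [← Complex.exp_conj, ← Complex.exp_add]
  · beta_reduce
    split_ifs with hg
    · simp [hg, hA]
    · rw [hθ, smul_smul, ← Complex.exp_add]
      simp

section CGU

variable {G Q : Type*} [Group G] [Fintype G] [DecidableEq G] [Group Q] [Fintype Q] [DecidableEq Q]
  {n : ℕ} (ρ : G →* unitaryGroup (Fin n) ℂ) (τ : Q →* unitaryGroup (Fin n) ℂ)

theorem mul_cguMatrix_eq_mul_phaseShift (φ : Fin n → ℂ) (g : G) (k : Q) (c : G → ℂ)
    (hc : ∀ a, (τ k).1 * (ρ a).1 = c a • ((ρ a).1 * (τ k).1)) :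
    (ρ g).1 * (τ k).1 * cguMatrix n ρ τ φ =
      cguMatrix n ρ τ φ * phaseShift (g, k) (fun y => c y.1) := by
  ext j ⟨a, b⟩
  have hmove : (ρ g).1 * (τ k).1 * ((ρ a).1 * (τ b).1) =
      c a • ((ρ (g * a)).1 * (τ (k * b)).1) := by
    simp only [map_mul, Submonoid.coe_mul]
    rw [Matrix.mul_assoc, ← Matrix.mul_assoc (τ k).1, hc]
    simp only [smul_mul_assoc, mul_smul_comm, Matrix.mul_assoc]
  rw [mul_phaseShift_apply]
  change (_ *ᵥ (_ *ᵥ φ)) j = _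
  rw [mulVec_mulVec, hmove]
  simp [cguMatrix, smul_mulVec, mul_comm]

end CGU

theorem stmt_17_general {G Q : Type*} [Group G] [Fintype G] [DecidableEq G]
    [Group Q] [Fintype Q] [DecidableEq Q] (n : ℕ)
    (ρ : G →* Matrix.unitaryGroup (Fin n) ℂ) (τ : Q →* Matrix.unitaryGroup (Fin n) ℂ)
    (φ : Fin n → ℂ)
    -- the representations commute up to a phase factor:
    (hcomm : ∀ (g : G) (k : Q), ∃ θ : ℝ,
      (ρ g : Matrix (Fin n) (Fin n) ℂ) * (τ k : Matrix (Fin n) (Fin n) ℂ) =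
        Complex.exp (θ * Complex.I) •
          ((τ k : Matrix (Fin n) (Fin n) ℂ) * (ρ g : Matrix (Fin n) (Fin n) ℂ))) :
    ∃ φbar : Fin n → ℂ, ∀ (g : G) (k : Q),
      (fun j : Fin n =>
          (cguMatrix n ρ τ φ *
            ((cguMatrix n ρ τ φ)ᴴ * cguMatrix n ρ τ φ)⁻¹) j (g, k)) =
        ((ρ g : Matrix (Fin n) (Fin n) ℂ) * (τ k : Matrix (Fin n) (Fin n) ℂ)).mulVec φbar := by
  refine ⟨fun j => reciprocalStates (cguMatrix n ρ τ φ) j 1, fun g k => funext fun j => ?_⟩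
  obtain ⟨c, hc1, hc_unit, hc⟩ :=
    exists_phase_of_commute_up_to_phase (fun a => (ρ a).1) (by simp) (τ k).1 (hcomm · k)
  have hU : ((ρ g).1 * (τ k).1)ᴴ * ((ρ g).1 * (τ k).1) = 1 :=
    mem_unitaryGroup_iff'.mp (mul_mem (ρ g).2 (τ k).2)
  have hshift := mul_reciprocalStates_of_mul_eq_mul hU
    (phaseShift_mul_conjTranspose (γ := (g, k)) (fun y => hc_unit y.1))
    (mul_cguMatrix_eq_mul_phaseShift ρ τ φ g k c hc)
  have hcol := congrFun (congrFun hshift j) 1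
  simp only [mul_phaseShift_apply, mul_one, Prod.fst_one, hc1] at hcol
  exact hcol.symm

theorem stmt_17 {G Q : Type*} [Group G] [Fintype G] [DecidableEq G]
    [Group Q] [Fintype Q] [DecidableEq Q] (n : ℕ)
    (ρ : G →* Matrix.unitaryGroup (Fin n) ℂ) (τ : Q →* Matrix.unitaryGroup (Fin n) ℂ)
    (φ : Fin n → ℂ)
    -- the representations commute up to a phase factor:
    (hcomm : ∀ (g : G) (k : Q), ∃ θ : ℝ,
      (ρ g : Matrix (Fin n) (Fin n) ℂ) * (τ k : Matrix (Fin n) (Fin n) ℂ) =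
        Complex.exp (θ * Complex.I) •
          ((τ k : Matrix (Fin n) (Fin n) ℂ) * (ρ g : Matrix (Fin n) (Fin n) ℂ)))
    -- the states are linearly independent:
    (hind : LinearIndependent ℂ (fun gk : G × Q =>
      ((ρ gk.1 : Matrix (Fin n) (Fin n) ℂ) * (τ gk.2 : Matrix (Fin n) (Fin n) ℂ)).mulVec φ)) :
    ∃ φbar : Fin n → ℂ, ∀ (g : G) (k : Q),
      (fun j : Fin n =>
          (cguMatrix n ρ τ φ *
            ((cguMatrix n ρ τ φ)ᴴ * cguMatrix n ρ τ φ)⁻¹) j (g, k)) =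
        ((ρ g : Matrix (Fin n) (Fin n) ℂ) * (τ k : Matrix (Fin n) (Fin n) ℂ)).mulVec φbar :=
  stmt_17_general n ρ τ φ hcomm
end
end

section
/- (Theorem 5, part 2b.) Consider a compound geometrically uniform state set with geometrically uniform generators whose representations commute up to a phase factor: for all g ∈ G, k ∈ Q there exists θ(g,k) ∈ ℝ with ρ(g)τ(k) = e^{iθ(g,k)} τ(k)ρ(g). Assume the states φ_{g,k} = ρ(g)τ(k)φ are linearly independent and the prior probabilities are equal, η_{g,k} = 1/(|G|·|Q|). Then the equal-probability measurement minimizes the probability of an inconclusive result: the constant vector p = λ_min is primal feasible, and (1/(|G|·|Q|))·Σ_{g,k} p_{g,k} ≤ λ_min for every primal feasible p, where λ_min is the smallest eigenvalue of the Gram matrix ΦᴴΦ. -/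
/-!
Because the reciprocal states form the dual frame `R = Φ (ΦᴴΦ)⁻¹`, with `Rᴴ Φ = 1`, feasibility
of `p` is equivalent to `ΦᴴΦ - diag p ⪰ 0`: conjugating by `Φ` turns `1 - R diag(p) Rᴴ` into
`ΦᴴΦ - diag p`, and conversely `1 - R diag(p) Rᴴ` is `R (ΦᴴΦ - diag p) Rᴴ` plus the positive
`(1 - ΦRᴴ)ᴴ (1 - ΦRᴴ)`. In particular the constant vector `λ_min` is feasible.

For optimality, left translation by `(h, l)` in `G × Q` maps each state, up to a phase, to its
image under the unitary `ρ(h) τ(l)`, so it preserves the Gram matrix up to a diagonal phase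
conjugation. Translating an eigenvector `u` for `λ_min` therefore gives eigenvectors whose weights
`|u|²` are translated, and testing `ΦᴴΦ - diag p ⪰ 0` on all of them and averaging over the group
yields `∑ p ≤ |G| |Q| λ_min`.
-/

open Matrix BigOperators ComplexOrder

noncomputable section

/-- The reciprocal states: columns of `Φ (ΦᴴΦ)⁻¹`. -/
def cguReciprocal {G Q : Type*} [Group G] [Fintype G] [DecidableEq G]
    [Group Q] [Fintype Q] [DecidableEq Q] (n : ℕ)
    (ρ : G →* Matrix.unitaryGroup (Fin n) ℂ) (τ : Q →* Matrix.unitaryGroup (Fin n) ℂ)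
    (φ : Fin n → ℂ) : Matrix (Fin n) (G × Q) ℂ :=
  cguMatrix n ρ τ φ * ((cguMatrix n ρ τ φ)ᴴ * cguMatrix n ρ τ φ)⁻¹

/-- The rank-one operator `Q_{g,k} = φ̃_{g,k} φ̃_{g,k}ᴴ`. -/
def cguQop {G Q : Type*} [Group G] [Fintype G] [DecidableEq G]
    [Group Q] [Fintype Q] [DecidableEq Q] (n : ℕ)
    (ρ : G →* Matrix.unitaryGroup (Fin n) ℂ) (τ : Q →* Matrix.unitaryGroup (Fin n) ℂ)
    (φ : Fin n → ℂ) (gk : G × Q) : Matrix (Fin n) (Fin n) ℂ :=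
  vecMulVec (fun a => cguReciprocal n ρ τ φ a gk) (fun b => star (cguReciprocal n ρ τ φ b gk))

/-- Primal feasibility for the CGU unambiguous-discrimination SDP. -/
def cguPrimalFeasible {G Q : Type*} [Group G] [Fintype G] [DecidableEq G]
    [Group Q] [Fintype Q] [DecidableEq Q] (n : ℕ)
    (ρ : G →* Matrix.unitaryGroup (Fin n) ℂ) (τ : Q →* Matrix.unitaryGroup (Fin n) ℂ)
    (φ : Fin n → ℂ) (p : G × Q → ℝ) : Prop :=
  (∀ gk, 0 ≤ p gk) ∧
    ((1 : Matrix (Fin n) (Fin n) ℂ) -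
      ∑ gk : G × Q, (p gk : ℂ) • cguQop n ρ τ φ gk).PosSemidef

section DualFrame

variable {m ι : Type*} [Fintype ι] [DecidableEq ι]

theorem Matrix.sum_smul_vecMulVec_col_s19 (R : Matrix m ι ℂ) (d : ι → ℂ) :
    ∑ j, d j • vecMulVec (R.col j) (star (R.col j)) = R * diagonal d * Rᴴ := by
  ext a b
  simp only [Matrix.sum_apply, Matrix.smul_apply, vecMulVec_apply, col_apply, Pi.star_apply,
    mul_apply, diagonal_apply, conjTranspose_apply, smul_eq_mul, mul_ite, mul_zero,
    Finset.sum_ite_eq', Finset.mem_univ, if_true]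
  exact Finset.sum_congr rfl fun _ _ => by ring

theorem Matrix.posSemidef_one_sub_dualFrame_iff [Fintype m] [DecidableEq m] (A : Matrix m ι ℂ)
    (hA : IsUnit (Aᴴ * A)) (D : Matrix ι ι ℂ) :
    (1 - A * (Aᴴ * A)⁻¹ * D * (A * (Aᴴ * A)⁻¹)ᴴ).PosSemidef ↔ (Aᴴ * A - D).PosSemidef := by
  set S := Aᴴ * A with hS
  set R := A * S⁻¹ with hR
  clear_value R S
  have hRS : R * S = A := by
    rw [hR, Matrix.mul_assoc, nonsing_inv_mul _ ((isUnit_iff_isUnit_det S).1 hA), Matrix.mul_one]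
  have hAR : Aᴴ * R = 1 := by
    rw [hR, ← Matrix.mul_assoc, ← hS, mul_nonsing_inv _ ((isUnit_iff_isUnit_det S).1 hA)]
  have hRA : Rᴴ * A = 1 := by
    rw [← conjTranspose_one, ← hAR, conjTranspose_mul, conjTranspose_conjTranspose]
  have hSR : S * Rᴴ = Aᴴ := by
    have hSH : Sᴴ = S := hS ▸ isHermitian_conjTranspose_mul_self A
    rw [← hRS, conjTranspose_mul, hSH]
  constructor
  · intro h
    convert h.conjTranspose_mul_mul_same A using 1
    simp only [Matrix.mul_sub, Matrix.sub_mul, Matrix.mul_one, ← Matrix.mul_assoc, hAR,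
      Matrix.one_mul]
    rw [Matrix.mul_assoc, hRA, Matrix.mul_one, hS]
  · intro h
    have key : 1 - R * D * Rᴴ = (1 - A * Rᴴ)ᴴ * (1 - A * Rᴴ) + R * (S - D) * Rᴴ := by
      have hP : R * Aᴴ * (A * Rᴴ) = A * Rᴴ := by
        rw [← Matrix.mul_assoc, Matrix.mul_assoc R, ← hS, hRS]
      have hPH : A * Rᴴ = R * Aᴴ := by rw [← hSR, ← Matrix.mul_assoc, hRS]
      simp only [conjTranspose_sub, conjTranspose_one, conjTranspose_mul,
        conjTranspose_conjTranspose, Matrix.mul_sub, Matrix.sub_mul, Matrix.mul_one,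
        Matrix.one_mul]
      rw [hP, Matrix.mul_assoc R S, hSR, hPH]
      abel
    rw [key]
    exact (posSemidef_conjTranspose_mul_self _).add (h.mul_mul_conjTranspose_same R)

end DualFrame

theorem Matrix.sum_mul_normSq_le_of_posSemidef_sub_diagonal {ι : Type*} [Fintype ι]
    [DecidableEq ι] {S : Matrix ι ι ℂ} {p : ι → ℝ}
    (hS : (S - diagonal fun i => (p i : ℂ)).PosSemidef) {lam : ℝ} {w : ι → ℂ}
    (hw : S *ᵥ w = (lam : ℂ) • w) :
    ∑ i, p i * Complex.normSq (w i) ≤ lam * ∑ i, Complex.normSq (w i) := by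
  have h := hS.dotProduct_mulVec_nonneg w
  have hform : star w ⬝ᵥ ((S - diagonal fun i => (p i : ℂ)) *ᵥ w) =
      ((lam * ∑ i, Complex.normSq (w i) - ∑ i, p i * Complex.normSq (w i) : ℝ) : ℂ) := by
    simp only [sub_mulVec, hw, mulVec_diagonal, dotProduct, Pi.sub_apply, Pi.smul_apply,
      Pi.star_apply, smul_eq_mul, Complex.star_def, mul_sub, Finset.sum_sub_distrib,
      Complex.ofReal_sub, Complex.ofReal_mul, Complex.ofReal_sum, Finset.mul_sum,
      Complex.normSq_eq_conj_mul_self]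
    congr 1 <;> exact Finset.sum_congr rfl fun _ _ => by ring
  rw [hform, Complex.zero_le_real, sub_nonneg] at h
  exact h

theorem Matrix.exists_eigenvector_normSq_comp_of_apply_apply {ι : Type*} [Fintype ι]
    {S : Matrix ι ι ℂ} (σ : ι ≃ ι) (c : ι → ℂ) (hc : ∀ i, ‖c i‖ = 1)
    (hS : ∀ i j, S (σ i) (σ j) = star (c i) * c j * S i j) {lam : ℂ} {u : ι → ℂ}
    (hu : S *ᵥ u = lam • u) :
    ∃ w : ι → ℂ, S *ᵥ w = lam • w ∧ ∀ i, Complex.normSq (w (σ i)) = Complex.normSq (u i) := by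
  set w : ι → ℂ := fun i => star (c (σ.symm i)) * u (σ.symm i) with hw
  have hwσ : ∀ i, w (σ i) = star (c i) * u i := fun i => by simp [hw]
  refine ⟨w, funext fun k => ?_, fun i => ?_⟩
  · obtain ⟨i, rfl⟩ := σ.surjective k
    have hcc : ∀ j, c j * star (c j) = 1 := fun j => by
      rw [Complex.star_def, Complex.mul_conj', hc]; simp
    calc (S *ᵥ w) (σ i) = ∑ j, S (σ i) (σ j) * w (σ j) := (σ.sum_comp _).symm
      _ = star (c i) * ∑ j, S i j * u j := by
        simp only [hS, hwσ, Finset.mul_sum]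
        exact Finset.sum_congr rfl fun j _ => by
          linear_combination (star (c i) * S i j * u j) * hcc j
      _ = star (c i) * (S *ᵥ u) i := rfl
      _ = (lam • w) (σ i) := by
        rw [hu, Pi.smul_apply, Pi.smul_apply, hwσ, smul_eq_mul, smul_eq_mul]
        ring
  · rw [hwσ, Complex.normSq_mul, Complex.star_def, Complex.normSq_conj,
      Complex.normSq_eq_norm_sq, hc, one_pow, one_mul]

theorem Matrix.conjTranspose_mul_self_apply_apply_of_col {m ι : Type*} [Fintype m]
    [DecidableEq m] {A : Matrix m ι ℂ} (U : unitaryGroup m ℂ) (σ : ι ≃ ι) (c : ι → ℂ)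
    (hA : ∀ i, A.col (σ i) = c i • ((U : Matrix m m ℂ) *ᵥ A.col i)) (i j : ι) :
    (Aᴴ * A) (σ i) (σ j) = star (c i) * c j * (Aᴴ * A) i j := by
  have hgram : ∀ k l, (Aᴴ * A) k l = star (A.col k) ⬝ᵥ A.col l := fun _ _ => rfl
  rw [hgram, hgram, hA, hA, star_smul, smul_dotProduct, dotProduct_smul, star_mulVec,
    ← dotProduct_mulVec, mulVec_mulVec, ← star_eq_conjTranspose, UnitaryGroup.star_mul_self,
    one_mulVec, smul_eq_mul, smul_eq_mul, ← mul_assoc]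

theorem sum_le_card_mul_of_forall_sum_mul_translate_le {K : Type*} [Group K] [Fintype K]
    (p a : K → ℝ) (ha : 0 < ∑ i, a i) (lam : ℝ)
    (h : ∀ s, ∑ i, p (s * i) * a i ≤ lam * ∑ i, a i) :
    ∑ i, p i ≤ Fintype.card K * lam := by
  have hsum : ∑ s, ∑ i, p (s * i) * a i = (∑ i, p i) * ∑ i, a i := by
    rw [Finset.sum_comm, Finset.mul_sum]
    refine Finset.sum_congr rfl fun i _ => ?_
    rw [← Finset.sum_mul, ← Equiv.sum_comp (Equiv.mulRight i) p]; rfl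
  have := Finset.sum_le_sum fun s (_ : s ∈ Finset.univ) => h s
  rw [hsum, Finset.sum_const, Finset.card_univ, nsmul_eq_mul, ← mul_assoc] at this
  exact le_of_mul_le_mul_right this ha

section CGU

variable {G Q : Type*} [Group G] [Fintype G] [Group Q] [Fintype Q] {n : ℕ}
  {ρ : G →* Matrix.unitaryGroup (Fin n) ℂ} {τ : Q →* Matrix.unitaryGroup (Fin n) ℂ}

theorem cguMatrix_col_mul (φ : Fin n → ℂ) {θ : G → Q → ℝ}
    (hθ : ∀ g k, (ρ g : Matrix (Fin n) (Fin n) ℂ) * (τ k : Matrix (Fin n) (Fin n) ℂ) =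
      Complex.exp (θ g k * Complex.I) •
        ((τ k : Matrix (Fin n) (Fin n) ℂ) * (ρ g : Matrix (Fin n) (Fin n) ℂ)))
    (s i : G × Q) :
    (cguMatrix n ρ τ φ).col (s * i) = Complex.exp (θ i.1 s.2 * Complex.I) •
      (((ρ s.1 * τ s.2 : Matrix.unitaryGroup (Fin n) ℂ) : Matrix (Fin n) (Fin n) ℂ) *ᵥ
        (cguMatrix n ρ τ φ).col i) := by
  change ((ρ (s.1 * i.1) : Matrix (Fin n) (Fin n) ℂ) *
      (τ (s.2 * i.2) : Matrix (Fin n) (Fin n) ℂ)) *ᵥ φ =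
    _ • (_ *ᵥ (((ρ i.1 : Matrix (Fin n) (Fin n) ℂ) * (τ i.2 : Matrix (Fin n) (Fin n) ℂ)) *ᵥ φ))
  rw [mulVec_mulVec, ← smul_mulVec]
  congr 1
  simp only [map_mul, Submonoid.coe_mul, Matrix.mul_assoc]
  rw [← Matrix.mul_assoc (τ s.2 : Matrix (Fin n) (Fin n) ℂ),
    ← Matrix.mul_assoc (ρ i.1 : Matrix (Fin n) (Fin n) ℂ), hθ, Matrix.smul_mul, Matrix.mul_smul]

theorem cguPrimalFeasible_iff [DecidableEq G] [DecidableEq Q] (φ : Fin n → ℂ)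
    (hΦ : IsUnit ((cguMatrix n ρ τ φ)ᴴ * cguMatrix n ρ τ φ)) (p : G × Q → ℝ) :
    cguPrimalFeasible n ρ τ φ p ↔ (∀ gk, 0 ≤ p gk) ∧
      ((cguMatrix n ρ τ φ)ᴴ * cguMatrix n ρ τ φ - diagonal fun gk => (p gk : ℂ)).PosSemidef := by
  rw [cguPrimalFeasible, ← posSemidef_one_sub_dualFrame_iff _ hΦ, ← sum_smul_vecMulVec_col_s19]
  rfl

theorem cguMatrix_sum_translate_mul_normSq_le [DecidableEq G] [DecidableEq Q]
    (φ : Fin n → ℂ) {θ : G → Q → ℝ}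
    (hθ : ∀ g k, (ρ g : Matrix (Fin n) (Fin n) ℂ) * (τ k : Matrix (Fin n) (Fin n) ℂ) =
      Complex.exp (θ g k * Complex.I) •
        ((τ k : Matrix (Fin n) (Fin n) ℂ) * (ρ g : Matrix (Fin n) (Fin n) ℂ)))
    {p : G × Q → ℝ}
    (hp : ((cguMatrix n ρ τ φ)ᴴ * cguMatrix n ρ τ φ - diagonal fun gk => (p gk : ℂ)).PosSemidef)
    {lam : ℝ} {u : G × Q → ℂ}
    (hu : ((cguMatrix n ρ τ φ)ᴴ * cguMatrix n ρ τ φ) *ᵥ u = (lam : ℂ) • u) (s : G × Q) :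
    ∑ i, p (s * i) * Complex.normSq (u i) ≤ lam * ∑ i, Complex.normSq (u i) := by
  obtain ⟨w, hw, hwu⟩ := exists_eigenvector_normSq_comp_of_apply_apply (Equiv.mulLeft s) _
    (fun i => Complex.norm_exp_ofReal_mul_I (θ i.1 s.2))
    (conjTranspose_mul_self_apply_apply_of_col _ _ _ (cguMatrix_col_mul φ hθ s)) hu
  have h := sum_mul_normSq_le_of_posSemidef_sub_diagonal hp hw
  rw [← Equiv.sum_comp (Equiv.mulLeft s),
    ← Equiv.sum_comp (Equiv.mulLeft s) fun i => Complex.normSq (w i)] at h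
  simp only [hwu] at h
  exact h

end CGU

theorem stmt_19 {G Q : Type*} [Group G] [Fintype G] [DecidableEq G]
    [Group Q] [Fintype Q] [DecidableEq Q] (n : ℕ)
    (ρ : G →* Matrix.unitaryGroup (Fin n) ℂ) (τ : Q →* Matrix.unitaryGroup (Fin n) ℂ)
    (φ : Fin n → ℂ)
    -- the representations commute up to a phase factor:
    (hcomm : ∀ (g : G) (k : Q), ∃ θ : ℝ,
      (ρ g : Matrix (Fin n) (Fin n) ℂ) * (τ k : Matrix (Fin n) (Fin n) ℂ) =
        Complex.exp (θ * Complex.I) •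
          ((τ k : Matrix (Fin n) (Fin n) ℂ) * (ρ g : Matrix (Fin n) (Fin n) ℂ)))
    -- the states are linearly independent:
    (hind : LinearIndependent ℂ (fun gk : G × Q =>
      ((ρ gk.1 : Matrix (Fin n) (Fin n) ℂ) * (τ gk.2 : Matrix (Fin n) (Fin n) ℂ)).mulVec φ))
    (lam : ℝ)
    -- `lam` is the smallest eigenvalue of the Gram matrix `ΦᴴΦ`:
    (hev : ∃ u : G × Q → ℂ, u ≠ 0 ∧
      ((cguMatrix n ρ τ φ)ᴴ * cguMatrix n ρ τ φ).mulVec u = (lam : ℂ) • u)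
    (hmin : (((cguMatrix n ρ τ φ)ᴴ * cguMatrix n ρ τ φ) - (lam : ℂ) • 1).PosSemidef) :
    cguPrimalFeasible n ρ τ φ (fun _ => lam) ∧
      ∀ p : G × Q → ℝ, cguPrimalFeasible n ρ τ φ p →
        (1 / ((Fintype.card G : ℝ) * (Fintype.card Q : ℝ))) * ∑ gk : G × Q, p gk ≤ lam := by
  set Φ := cguMatrix n ρ τ φ
  have hΦ : (Φᴴ * Φ).PosDef := .conjTranspose_mul_self Φ (mulVec_injective_iff.2 hind)
  obtain ⟨u, hu0, hu⟩ := hev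
  have hu_pos : 0 < ∑ gk, Complex.normSq (u gk) := by
    obtain ⟨gk, hgk⟩ := Function.ne_iff.1 hu0
    exact Finset.sum_pos' (fun _ _ => Complex.normSq_nonneg _)
      ⟨gk, Finset.mem_univ _, Complex.normSq_pos.2 hgk⟩
  have hlam : 0 ≤ lam := by
    have h := sum_mul_normSq_le_of_posSemidef_sub_diagonal (p := 0)
      (by simpa using hΦ.posSemidef) hu
    simp only [Pi.zero_apply, zero_mul, Finset.sum_const_zero] at h
    exact nonneg_of_mul_nonneg_left h hu_pos
  refine ⟨(cguPrimalFeasible_iff φ hΦ.isUnit _).2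
    ⟨fun _ => hlam, by rwa [← smul_one_eq_diagonal]⟩, fun p hp => ?_⟩
  choose θ hθ using hcomm
  have hsum := sum_le_card_mul_of_forall_sum_mul_translate_le p _ hu_pos lam
    (cguMatrix_sum_translate_mul_normSq_le φ hθ ((cguPrimalFeasible_iff φ hΦ.isUnit p).1 hp).2 hu)
  rw [Fintype.card_prod, Nat.cast_mul] at hsum
  have hcard : (0 : ℝ) < Fintype.card G * Fintype.card Q := by positivity
  rw [one_div_mul_eq_div, div_le_iff₀ hcard]
  linarith
end
end
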